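/- arXiv:2505.12446 — 6 statements merged into one kernel-verified Lean document; each statement's English description precedes it below -/
import Mathlib

section
/- Let M be an n×n symmetric integer matrix and p an odd prime. If p divides Δ_M but p² does not divide Δ_M, then there exist an integer λ₀ and a polynomial φ(x) ∈ ℤ[x] such that χ(M;x) ≡ (x − λ₀)²·φ(x) (mod p), where the reduction of φ(x) modulo p is squarefree in 𝔽_p[x] and φ(λ₀) ≢ 0 (mod p). -/
open Polynomial Matrix

/-- Discriminant of an integer polynomial: the product of the squared differences
of its complex roots. -/
noncomputable def polyDisc (f : Polynomial ℤ) : ℂ :=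
  let l := (f.map (Int.castRingHom ℂ)).roots.toList
  ∏ p ∈ (Finset.range l.length ×ˢ Finset.range l.length).filter fun p => p.1 < p.2,
    (l.getD p.2 0 - l.getD p.1 0) ^ 2

lemma kernel_pair_sq_dvd {m p : ℕ} (hp : p.Prime) (A : Matrix (Fin m) (Fin m) ℤ)
    {u v : Fin m → ZMod p} (huv : LinearIndependent (ZMod p) ![u, v])
    (hu : (A.map (Int.castRingHom (ZMod p))).mulVec u = 0)
    (hv : (A.map (Int.castRingHom (ZMod p))).mulVec v = 0) :
    (p : ℤ) ^ 2 ∣ A.det := by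
  classical
  haveI : Fact p.Prime := ⟨hp⟩
  have huv' : LinearIndepOn (ZMod p) id (Set.range ![u, v]) :=
    (linearIndepOn_id_range_iff huv.injective).mpr huv
  let b : Module.Basis _ (ZMod p) (Fin m → ZMod p) := Module.Basis.extend huv'
  haveI : Fintype (huv'.extend (Set.subset_univ _)) := FiniteDimensional.fintypeBasisIndex b
  have hcard : Fintype.card (huv'.extend (Set.subset_univ _)) = m := by
    have h1 := Module.finrank_eq_card_basis b
    rw [Module.finrank_fintype_fun_eq_card, Fintype.card_fin] at h1
    exact h1.symm
  let e : Fin m ≃ huv'.extend (Set.subset_univ _) :=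
    Fintype.equivOfCardEq (by rw [Fintype.card_fin, hcard])
  have hmemu : u ∈ huv'.extend (Set.subset_univ _) :=
    huv'.subset_extend _ (Set.mem_range.mpr ⟨0, rfl⟩)
  have hmemv : v ∈ huv'.extend (Set.subset_univ _) :=
    huv'.subset_extend _ (Set.mem_range.mpr ⟨1, rfl⟩)
  have hune : u ≠ v := by
    intro h
    obtain ⟨h1, -⟩ := LinearIndependent.pair_iff.mp huv 1 (-1) (by rw [h]; simp)
    exact one_ne_zero h1
  let i0 : huv'.extend (Set.subset_univ _) := ⟨u, hmemu⟩
  let i1 : huv'.extend (Set.subset_univ _) := ⟨v, hmemv⟩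
  let j0 := e.symm i0
  let j1 := e.symm i1
  have hj : j0 ≠ j1 := by
    intro h
    have : i0 = i1 := e.symm.injective h
    exact hune (congrArg Subtype.val this)
  let c : Module.Basis (Fin m) (ZMod p) (Fin m → ZMod p) := b.reindex e.symm
  have hc0 : c j0 = u := by
    simp only [c, Module.Basis.reindex_apply, Equiv.symm_symm, j0, Equiv.apply_symm_apply]
    exact Module.Basis.extend_apply_self huv' i0
  have hc1 : c j1 = v := by
    simp only [c, Module.Basis.reindex_apply, Equiv.symm_symm, j1, Equiv.apply_symm_apply]
    exact Module.Basis.extend_apply_self huv' i1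
  let Bbar : Matrix (Fin m) (Fin m) (ZMod p) := Matrix.of fun i j => c j i
  have hBdet : Bbar.det ≠ 0 := by
    have hBb : Bbar = (Pi.basisFun (ZMod p) (Fin m)).toMatrix ⇑c := by
      ext i j
      simp [Bbar, Module.Basis.toMatrix_apply]
    rw [hBb]
    letI := (Pi.basisFun (ZMod p) (Fin m)).invertibleToMatrix c
    exact (Matrix.isUnit_det_of_invertible _).ne_zero
  let B : Matrix (Fin m) (Fin m) ℤ := Matrix.of fun i j => ((ZMod.cast (c j i) : ℤ))
  have hBmap : B.map (Int.castRingHom (ZMod p)) = Bbar := by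
    ext i j
    simp [B, Bbar, ZMod.intCast_zmod_cast]
  have hcol : ∀ (j' : Fin m) (w : Fin m → ZMod p), c j' = w →
      (A.map (Int.castRingHom (ZMod p))).mulVec w = 0 → ∀ i, (p:ℤ) ∣ (A * B) i j' := by
    intro j' w hcw hw i
    have h0 : (((A * B) i j' : ℤ) : ZMod p) = 0 := by
      have hmap : (A * B).map (Int.castRingHom (ZMod p)) = (A.map (Int.castRingHom (ZMod p))) * Bbar := by
        rw [Matrix.map_mul, hBmap]
      have hh : (((A * B) i j' : ℤ) : ZMod p) = ((A * B).map (Int.castRingHom (ZMod p))) i j' := rfl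
      rw [hh, hmap, Matrix.mul_apply]
      have hbw : ∀ k, Bbar k j' = w k := by intro k; rw [← hcw]; rfl
      calc ∑ k, (A.map (Int.castRingHom (ZMod p))) i k * Bbar k j'
          = ∑ k, (A.map (Int.castRingHom (ZMod p))) i k * w k := by
            refine Finset.sum_congr rfl fun k _ => by rw [hbw k]
        _ = ((A.map (Int.castRingHom (ZMod p))).mulVec w) i := rfl
        _ = 0 := by rw [hw]; rfl
    exact (ZMod.intCast_zmod_eq_zero_iff_dvd _ _).mp h0
  have hcol0 := hcol j0 u hc0 hu
  have hcol1 := hcol j1 v hc1 hv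
  let c0 : Fin m → ℤ := fun i => (A * B) i j0 / p
  let c1 : Fin m → ℤ := fun i => (A * B) i j1 / p
  have hc0' : ∀ i, (A * B) i j0 = (p:ℤ) * c0 i := fun i => (Int.mul_ediv_cancel' (hcol0 i)).symm
  have hc1' : ∀ i, (A * B) i j1 = (p:ℤ) * c1 i := fun i => (Int.mul_ediv_cancel' (hcol1 i)).symm
  set N := (A * B).updateCol j0 c0 with hN
  have hstep1 : (A * B).det = (p:ℤ) * N.det := by
    conv_lhs => rw [show (A * B) = (A * B).updateCol j0 ((p:ℤ) • c0) by
      rw [show ((p:ℤ) • c0) = fun i => (A * B) i j0 from funext fun i => by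
        simp [Pi.smul_apply, smul_eq_mul, hc0' i]]
      rw [Matrix.updateCol_eq_self]]
    rw [Matrix.det_updateCol_smul]
  have hNc1 : ∀ i, N i j1 = (p:ℤ) * c1 i := by
    intro i
    rw [hN, Matrix.updateCol_ne hj.symm]
    exact hc1' i
  have hstep2 : N.det = (p:ℤ) * (N.updateCol j1 c1).det := by
    conv_lhs => rw [show N = N.updateCol j1 ((p:ℤ) • c1) by
      rw [show ((p:ℤ) • c1) = fun i => N i j1 from funext fun i => by
        simp [Pi.smul_apply, smul_eq_mul, hNc1 i]]
      rw [Matrix.updateCol_eq_self]]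
    rw [Matrix.det_updateCol_smul]
  have hdet : (p:ℤ)^2 ∣ A.det * B.det := by
    rw [← Matrix.det_mul, hstep1, hstep2]
    exact ⟨(N.updateCol j1 c1).det, by ring⟩
  have hpB : ¬ (p:ℤ) ∣ B.det := by
    intro hdvdB
    apply hBdet
    have h0 : (Int.castRingHom (ZMod p)) B.det = 0 :=
      (ZMod.intCast_zmod_eq_zero_iff_dvd _ _).mpr hdvdB
    rw [RingHom.map_det, RingHom.mapMatrix_apply, hBmap] at h0
    exact h0
  have hpZ : Prime (p:ℤ) := Nat.prime_iff_prime_int.mp hp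
  have hpA : (p:ℤ) ∣ A.det :=
    ((hpZ.dvd_mul).mp (dvd_trans (dvd_pow_self _ two_ne_zero) hdet)).resolve_right hpB
  obtain ⟨a, ha⟩ := hpA
  obtain ⟨k, hk⟩ := hdet
  have hcan : a * B.det = (p:ℤ) * k := by
    have hpne : (p:ℤ) ≠ 0 := by exact_mod_cast hp.ne_zero
    apply mul_left_cancel₀ hpne
    rw [← mul_assoc, ← ha, hk]; ring
  have hpa : (p:ℤ) ∣ a := (hpZ.dvd_mul.mp ⟨k, hcan⟩).resolve_right hpB
  obtain ⟨b', hb'⟩ := hpa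
  exact ⟨b', by rw [ha, hb']; ring⟩

lemma mulmat_map {S : Type*} [CommRing S] (φ : ℤ →+* S) (f : Polynomial ℤ) (hf : f.Monic)
    (i j : ℕ) :
    φ (((derivative f * X ^ j) %ₘ f).coeff i)
      = ((derivative (f.map φ) * X ^ j) %ₘ f.map φ).coeff i := by
  rw [← Polynomial.coeff_map, Polynomial.map_modByMonic _ hf, Polynomial.map_mul,
    Polynomial.map_pow, Polynomial.map_X, Polynomial.derivative_map]

lemma poly_mulVec {K : Type*} [Field K] {m : ℕ} (q : K[X]) (g h : K[X]) (hh : h.natDegree < m) :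
    (Matrix.of fun i j : Fin m => ((g * X ^ (j : ℕ)) %ₘ q).coeff (i : ℕ)).mulVec
        (fun j : Fin m => h.coeff (j : ℕ))
      = fun i : Fin m => ((g * h) %ₘ q).coeff (i : ℕ) := by
  funext i
  have hrep : ∑ j : Fin m, (h.coeff (j:ℕ)) • (X ^ (j:ℕ) : K[X]) = h := by
    conv_rhs => rw [h.as_sum_range' m hh]
    rw [← Fin.sum_univ_eq_sum_range (fun j => monomial j (h.coeff j)) m]
    exact Finset.sum_congr rfl fun j _ => smul_X_eq_monomial
  have hmul : ∑ j : Fin m, (h.coeff (j:ℕ)) • (g * X ^ (j:ℕ)) = g * h := by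
    calc ∑ j : Fin m, (h.coeff (j:ℕ)) • (g * X ^ (j:ℕ))
        = ∑ j : Fin m, g * ((h.coeff (j:ℕ)) • X ^ (j:ℕ)) := by
          refine Finset.sum_congr rfl fun j _ => (mul_smul_comm _ _ _).symm
      _ = g * ∑ j : Fin m, (h.coeff (j:ℕ)) • (X ^ (j:ℕ) : K[X]) := (Finset.mul_sum _ _ _).symm
      _ = g * h := by rw [hrep]
  have hsum : ∑ j : Fin m, (h.coeff (j:ℕ)) • ((g * X ^ (j:ℕ)) %ₘ q) = (g * h) %ₘ q := by
    calc ∑ j : Fin m, (h.coeff (j:ℕ)) • ((g * X ^ (j:ℕ)) %ₘ q)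
        = ∑ j : Fin m, (modByMonicHom q) ((h.coeff (j:ℕ)) • (g * X ^ (j:ℕ))) := by
          refine Finset.sum_congr rfl fun j _ => ?_
          rw [_root_.map_smul]
          rfl
      _ = (modByMonicHom q) (∑ j : Fin m, (h.coeff (j:ℕ)) • (g * X ^ (j:ℕ))) :=
          (map_sum (modByMonicHom q) _ _).symm
      _ = (g * h) %ₘ q := by rw [hmul]; rfl
  show ∑ j : Fin m, ((g * X ^ (j:ℕ)) %ₘ q).coeff i * h.coeff j = _
  calc ∑ j : Fin m, ((g * X ^ (j:ℕ)) %ₘ q).coeff i * h.coeff j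
      = ∑ j : Fin m, ((h.coeff (j:ℕ)) • ((g * X ^ (j:ℕ)) %ₘ q)).coeff i := by
        refine Finset.sum_congr rfl fun j _ => ?_
        rw [coeff_smul, smul_eq_mul, mul_comm]
    _ = (∑ j : Fin m, (h.coeff (j:ℕ)) • ((g * X ^ (j:ℕ)) %ₘ q)).coeff i :=
        (finset_sum_coeff _ _ _).symm
    _ = ((g * h) %ₘ q).coeff i := by rw [hsum]

lemma prod_erase_sq {m : ℕ} (α : Fin m → ℂ) :
    ∏ i, ∏ j ∈ Finset.univ.erase i, (α i - α j)^2
      = (∏ i, ∏ j ∈ Finset.Ioi i, (α j - α i)^2)^2 := by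
  have herase : ∀ i : Fin m, Finset.univ.erase i = Finset.Ioi i ∪ Finset.Iio i := by
    intro i
    ext j
    simp only [Finset.mem_erase, Finset.mem_univ, and_true, Finset.mem_union, Finset.mem_Ioi,
      Finset.mem_Iio]
    constructor
    · intro h
      rcases lt_or_gt_of_ne h with h' | h'
      · exact Or.inr h'
      · exact Or.inl h'
    · rintro (h | h)
      · exact ne_of_gt h
      · exact ne_of_lt h
  have hdisj : ∀ i : Fin m, Disjoint (Finset.Ioi i) (Finset.Iio i) := by
    intro i
    refine Finset.disjoint_left.mpr ?_
    intro a ha hb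
    rw [Finset.mem_Ioi] at ha
    rw [Finset.mem_Iio] at hb
    exact absurd (ha.trans hb) (lt_irrefl _)
  have hswap : ∏ i, ∏ j ∈ Finset.Iio i, (α i - α j)^2
      = ∏ i, ∏ j ∈ Finset.Ioi i, (α j - α i)^2 := by
    rw [Finset.prod_sigma', Finset.prod_sigma']
    refine Finset.prod_nbij' (fun x => ⟨x.2, x.1⟩) (fun x => ⟨x.2, x.1⟩) ?_ ?_ ?_ ?_ ?_ <;> simp
  calc ∏ i, ∏ j ∈ Finset.univ.erase i, (α i - α j)^2
      = ∏ i, ((∏ j ∈ Finset.Ioi i, (α i - α j)^2) * ∏ j ∈ Finset.Iio i, (α i - α j)^2) := by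
        refine Finset.prod_congr rfl fun i _ => ?_
        rw [herase i, Finset.prod_union (hdisj i)]
    _ = (∏ i, ∏ j ∈ Finset.Ioi i, (α i - α j)^2) * ∏ i, ∏ j ∈ Finset.Iio i, (α i - α j)^2 :=
        Finset.prod_mul_distrib
    _ = (∏ i, ∏ j ∈ Finset.Ioi i, (α j - α i)^2) * ∏ i, ∏ j ∈ Finset.Ioi i, (α j - α i)^2 := by
        rw [hswap]
        congr 1
        exact Finset.prod_congr rfl fun i _ => Finset.prod_congr rfl fun j _ => by ring
    _ = (∏ i, ∏ j ∈ Finset.Ioi i, (α j - α i)^2)^2 := (sq _).symm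

set_option maxHeartbeats 1600000 in
/-- Let `M` be a symmetric integer matrix and `p` an odd prime with
`p ∣ Δ_M` but `p² ∤ Δ_M`. Then `χ(M;x) ≡ (x - λ₀)² φ(x) (mod p)` for some integer
`λ₀` and `φ ∈ ℤ[x]` with `φ` squarefree mod `p` and `φ(λ₀) ≢ 0 (mod p)`. -/
theorem disc_once_divisible_factorization (n : ℕ) (M : Matrix (Fin n) (Fin n) ℤ)
    (hM : M.IsSymm) (p : ℕ) (hp : p.Prime) (hodd : Odd p)
    (D : ℤ) (hD : polyDisc M.charpoly = (D : ℂ))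
    (hdvd : (p : ℤ) ∣ D) (hndvd : ¬ (p : ℤ) ^ 2 ∣ D) :
    ∃ (lam : ℤ) (φ : Polynomial ℤ),
      M.charpoly.map (Int.castRingHom (ZMod p)) =
        (X - C ((lam : ZMod p))) ^ 2 * φ.map (Int.castRingHom (ZMod p)) ∧
      Squarefree (φ.map (Int.castRingHom (ZMod p))) ∧
      ¬ (p : ℤ) ∣ φ.eval lam := by
  classical
  haveI : Fact p.Prime := ⟨hp⟩
  set f : Polynomial ℤ := M.charpoly with hfdef
  have hmon : f.Monic := Matrix.charpoly_monic M
  set m : ℕ := f.natDegree with hmdef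
  have hD0 : D ≠ 0 := fun h => hndvd (h ▸ dvd_zero _)
  -- complex side
  set fC : Polynomial ℂ := f.map (Int.castRingHom ℂ) with hfCdef
  have hmonC : fC.Monic := hmon.map _
  have hfC0 : fC ≠ 0 := hmonC.ne_zero
  have hdegC : fC.natDegree = m := hmon.natDegree_map _
  set l : List ℂ := fC.roots.toList with hldef
  have hl : l.length = m := by
    rw [hldef, Multiset.length_toList, ← hdegC]
    exact Polynomial.splits_iff_card_roots.mp (IsAlgClosed.splits fC)
  have hPD : polyDisc f = ∏ q ∈ (Finset.range l.length ×ˢ Finset.range l.length).filter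
      (fun q => q.1 < q.2), (l.getD q.2 0 - l.getD q.1 0)^2 := rfl
  set α : Fin m → ℂ := fun i => l.getD (i : ℕ) 0 with hαdef
  -- distinct roots
  have hinj : Function.Injective α := by
    intro i j hij
    by_contra hne
    have key : ∀ a b : Fin m, a < b → α a ≠ α b := by
      intro a b hab hcon
      have hmem : ((a:ℕ), (b:ℕ)) ∈ (Finset.range l.length ×ˢ Finset.range l.length).filter
          (fun q => q.1 < q.2) := by
        simp only [Finset.mem_filter, Finset.mem_product, Finset.mem_range, hl]
        exact ⟨⟨a.isLt, b.isLt⟩, hab⟩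
      have hz : (l.getD (b:ℕ) 0 - l.getD (a:ℕ) 0)^2 = (0:ℂ) := by
        have h1 : l.getD (a:ℕ) 0 = l.getD (b:ℕ) 0 := hcon
        rw [h1, sub_self]
        ring
      have h0 : polyDisc f = 0 := by
        rw [hPD]
        exact Finset.prod_eq_zero hmem hz
      rw [hD] at h0
      exact hD0 (by exact_mod_cast h0)
    rcases lt_or_gt_of_ne (fun h : i = j => hne h) with h | h
    · exact key i j h hij
    · exact key j i h hij.symm
  -- the polynomial as a product over roots
  have hprod : fC = ∏ i : Fin m, (X - C (α i)) := by
    have h1 : fC = (l.map (fun a => X - C a)).prod := by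
      conv_lhs => rw [(IsAlgClosed.splits fC).eq_prod_roots_of_monic hmonC]
      rw [show fC.roots = (l : Multiset ℂ) by rw [hldef, Multiset.coe_toList]]
      rw [Multiset.map_coe, Multiset.prod_coe]
    rw [h1, ← List.ofFn_getElem_eq_map l (fun a => X - C a), List.prod_ofFn]
    have h2 : ∀ i : Fin l.length, (X - C (l[(i:ℕ)]) : Polynomial ℂ)
        = X - C (α (Fin.cast hl i)) := by
      intro i
      congr 1
      have : α (Fin.cast hl i) = l.getD (i:ℕ) 0 := rfl
      rw [this, List.getD_eq_getElem l 0 i.isLt]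
    rw [Finset.prod_congr rfl (fun i _ => h2 i)]
    exact Fin.prod_congr' (fun i : Fin m => (X : Polynomial ℂ) - C (α i)) hl
  -- roots as multiset
  have hlofn : l = List.ofFn α := by
    apply List.ext_getElem
    · simp [hl]
    · intro k h1 h2
      rw [List.getElem_ofFn]
      exact (List.getD_eq_getElem l 0 h1).symm
  have hrootsm : fC.roots = Multiset.map α Finset.univ.val := by
    rw [show fC.roots = (l : Multiset ℂ) by rw [hldef, Multiset.coe_toList]]
    rw [Fin.univ_val_map, hlofn]
  -- evaluation of the derivative at a root
  have heval : ∀ i : Fin m, (derivative fC).eval (α i)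
      = ∏ j ∈ Finset.univ.erase i, (α i - α j) := by
    intro i
    have hmem : α i ∈ fC.roots := by
      rw [hrootsm]
      exact Multiset.mem_map_of_mem α (Finset.mem_univ_val _)
    have h1 : fC = (Multiset.map (fun a => X - C a) fC.roots).prod :=
      (IsAlgClosed.splits fC).eq_prod_roots_of_monic hmonC
    have h2 := Polynomial.eval_multiset_prod_X_sub_C_derivative hmem
    rw [← h1] at h2
    rw [h2, hrootsm, ← Multiset.map_erase α hinj, Multiset.map_map]
    rw [show Finset.univ.val.erase i = (Finset.univ.erase i).val from (Finset.erase_val _ _).symm]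
    rfl
  -- the multiplication-by-f' matrix
  set A : Matrix (Fin m) (Fin m) ℤ :=
    Matrix.of (fun i j : Fin m => ((derivative f * X ^ (j:ℕ)) %ₘ f).coeff (i:ℕ)) with hAdef
  have hAC : A.map (Int.castRingHom ℂ) =
      Matrix.of (fun i j : Fin m => ((derivative fC * X ^ (j:ℕ)) %ₘ fC).coeff (i:ℕ)) := by
    ext i j
    rw [Matrix.map_apply]
    exact mulmat_map (Int.castRingHom ℂ) f hmon i j
  have hkey : (Matrix.vandermonde α) * (A.map (Int.castRingHom ℂ))
      = Matrix.diagonal (fun i => (derivative fC).eval (α i)) * (Matrix.vandermonde α) := by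
    ext i j
    rw [Matrix.mul_apply, Matrix.diagonal_mul, hAC]
    have hdegr : ((derivative fC * X ^ (j:ℕ)) %ₘ fC).natDegree < m := by
      rcases eq_or_ne ((derivative fC * X ^ (j:ℕ)) %ₘ fC) 0 with h0 | h0
      · rw [h0, Polynomial.natDegree_zero]; exact i.pos
      · have hlt := Polynomial.degree_modByMonic_lt (derivative fC * X ^ (j:ℕ)) hmonC
        have h4 := Polynomial.natDegree_lt_natDegree h0 hlt
        rwa [hdegC] at h4
    have hroot : fC.eval (α i) = 0 := by
      have hmem : α i ∈ fC.roots := by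
        rw [hrootsm]
        exact Multiset.mem_map_of_mem α (Finset.mem_univ_val _)
      exact Polynomial.isRoot_of_mem_roots hmem
    calc ∑ k : Fin m, Matrix.vandermonde α i k
          * (Matrix.of (fun i' j' : Fin m => ((derivative fC * X ^ (j':ℕ)) %ₘ fC).coeff (i':ℕ))) k j
        = ∑ k : Fin m, ((derivative fC * X ^ (j:ℕ)) %ₘ fC).coeff (k:ℕ) * (α i)^(k:ℕ) := by
          refine Finset.sum_congr rfl fun k _ => ?_
          rw [Matrix.vandermonde_apply, Matrix.of_apply]
          ring
      _ = ((derivative fC * X ^ (j:ℕ)) %ₘ fC).eval (α i) := by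
          rw [Polynomial.eval_eq_sum_range' hdegr]
          rw [← Fin.sum_univ_eq_sum_range
            (fun k => ((derivative fC * X ^ (j:ℕ)) %ₘ fC).coeff k * (α i)^k) m]
      _ = (derivative fC).eval (α i) * (α i)^(j:ℕ) := by
          have hdiv := Polynomial.modByMonic_add_div (derivative fC * X ^ (j:ℕ)) fC
          have h3 := congrArg (Polynomial.eval (α i)) hdiv
          simp only [Polynomial.eval_add, Polynomial.eval_mul, Polynomial.eval_pow,
            Polynomial.eval_X, hroot, zero_mul, add_zero] at h3
          exact h3
      _ = (derivative fC).eval (α i) * Matrix.vandermonde α i j := by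
          rw [Matrix.vandermonde_apply]
  have hVdet : (Matrix.vandermonde α).det ≠ 0 := by
    rw [Matrix.det_vandermonde_ne_zero_iff]
    exact hinj
  have hdetAC : ((A.det : ℤ) : ℂ) = ∏ i, (derivative fC).eval (α i) := by
    show (Int.castRingHom ℂ) A.det = _
    rw [RingHom.map_det, RingHom.mapMatrix_apply]
    apply mul_left_cancel₀ hVdet
    rw [← Matrix.det_mul, hkey, Matrix.det_mul, Matrix.det_diagonal]
    ring
  -- the product formula for D
  have hDprod : (D:ℂ) = ∏ i : Fin m, ∏ j ∈ Finset.Ioi i, (α j - α i)^2 := by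
    rw [← hD, hPD]
    conv_rhs => rw [← Finset.prod_sigma Finset.univ (fun i : Fin m => Finset.Ioi i)
      (fun x => (α x.2 - α x.1)^2)]
    refine Finset.prod_bij'
      (fun (q : ℕ × ℕ) (hq : q ∈ (Finset.range l.length ×ˢ Finset.range l.length).filter
          (fun q => q.1 < q.2)) =>
        (⟨⟨q.1, by
            have h1 := (Finset.mem_product.mp (Finset.mem_filter.mp hq).1).1
            rwa [Finset.mem_range, hl] at h1⟩,
          ⟨q.2, by
            have h1 := (Finset.mem_product.mp (Finset.mem_filter.mp hq).1).2
            rwa [Finset.mem_range, hl] at h1⟩⟩ : Σ _ : Fin m, Fin m))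
      (fun x _ => ((x.1 : ℕ), (x.2 : ℕ))) ?_ ?_ ?_ ?_ ?_
    · intro a ha
      rw [Finset.mem_sigma]
      exact ⟨Finset.mem_univ _, Finset.mem_Ioi.mpr (Finset.mem_filter.mp ha).2⟩
    · intro x hx
      rw [Finset.mem_sigma] at hx
      have h2' := Finset.mem_Ioi.mp hx.2
      have h2 : (x.1 : ℕ) < (x.2 : ℕ) := h2'
      simp only [Finset.mem_filter, Finset.mem_product, Finset.mem_range, hl]
      exact ⟨⟨x.1.isLt, x.2.isLt⟩, h2⟩
    · intro a ha
      rfl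
    · intro x hx
      rfl
    · intro a ha
      rfl
  -- det A squared equals D squared
  have hsq : ((A.det : ℤ) : ℂ)^2 = ((D : ℤ) : ℂ)^2 := by
    calc ((A.det : ℤ) : ℂ)^2
        = (∏ i : Fin m, ∏ j ∈ Finset.univ.erase i, (α i - α j))^2 := by
          rw [hdetAC, Finset.prod_congr rfl fun i _ => heval i]
      _ = ∏ i : Fin m, ∏ j ∈ Finset.univ.erase i, (α i - α j)^2 := by
          rw [← Finset.prod_pow]
          exact Finset.prod_congr rfl fun i _ => (Finset.prod_pow _ _ _).symm
      _ = (∏ i : Fin m, ∏ j ∈ Finset.Ioi i, (α j - α i)^2)^2 := prod_erase_sq α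
      _ = ((D : ℤ) : ℂ)^2 := by rw [← hDprod]
  have hdet2 : A.det^2 = D^2 := by exact_mod_cast hsq
  have habs : A.det.natAbs = D.natAbs := by
    have h := congrArg Int.natAbs hdet2
    rw [Int.natAbs_pow, Int.natAbs_pow] at h
    exact Nat.pow_left_injective two_ne_zero h
  have hdvdA : (p:ℤ) ∣ A.det := by
    have h1 : (p:ℤ).natAbs ∣ D.natAbs := Int.natAbs_dvd_natAbs.mpr hdvd
    rw [← habs] at h1
    exact Int.natAbs_dvd_natAbs.mp h1
  have hndvdA : ¬ (p:ℤ)^2 ∣ A.det := by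
    intro hcon
    apply hndvd
    have h1 : ((p:ℤ)^2).natAbs ∣ A.det.natAbs := Int.natAbs_dvd_natAbs.mpr hcon
    rw [habs] at h1
    exact Int.natAbs_dvd_natAbs.mp h1
  -- mod p side
  set fK : Polynomial (ZMod p) := f.map (Int.castRingHom (ZMod p)) with hfKdef
  have hmonK : fK.Monic := hmon.map _
  have hK0 : fK ≠ 0 := hmonK.ne_zero
  have hdegK : fK.natDegree = m := hmon.natDegree_map _
  have hAK : A.map (Int.castRingHom (ZMod p)) =
      Matrix.of (fun i j : Fin m => ((derivative fK * X ^ (j:ℕ)) %ₘ fK).coeff (i:ℕ)) := by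
    ext i j
    rw [Matrix.map_apply]
    exact mulmat_map (Int.castRingHom (ZMod p)) f hmon i j
  set d : Polynomial (ZMod p) := EuclideanDomain.gcd fK (derivative fK) with hddef
  have hd0 : d ≠ 0 := by
    intro h
    exact hK0 (EuclideanDomain.gcd_eq_zero_iff.mp h).1
  have hdl : d ∣ fK := EuclideanDomain.gcd_dvd_left _ _
  have hdr : d ∣ derivative fK := EuclideanDomain.gcd_dvd_right _ _
  -- direction 1 : p ∣ det A  forces a common factor
  have hnotco : ¬ IsCoprime fK (derivative fK) := by
    intro hco
    have hdet0 : (A.map (Int.castRingHom (ZMod p))).det = 0 := by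
      have h0 : (Int.castRingHom (ZMod p)) A.det = 0 :=
        (ZMod.intCast_zmod_eq_zero_iff_dvd _ _).mpr hdvdA
      rw [RingHom.map_det, RingHom.mapMatrix_apply] at h0
      exact h0
    obtain ⟨z, hz0, hz⟩ := Matrix.exists_mulVec_eq_zero_iff.mpr hdet0
    have hm0 : 0 < m := by
      rcases Nat.eq_zero_or_pos m with h | h
      · exfalso
        apply hz0
        funext i
        exact absurd i.isLt (by omega)
      · exact h
    set zp : Polynomial (ZMod p) := ∑ j : Fin m, C (z j) * X ^ (j:ℕ) with hzpdef
    have hzc : ∀ k : ℕ, zp.coeff k = ∑ j : Fin m, if (j:ℕ) = k then z j else 0 := by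
      intro k
      rw [hzpdef, finset_sum_coeff]
      refine Finset.sum_congr rfl fun j _ => ?_
      rw [coeff_C_mul, coeff_X_pow]
      by_cases hc : k = (j:ℕ)
      · rw [if_pos hc, if_pos hc.symm, mul_one]
      · rw [if_neg hc, if_neg (fun hh => hc hh.symm), mul_zero]
    have hzcoeff1 : ∀ j : Fin m, zp.coeff (j:ℕ) = z j := by
      intro j
      rw [hzc]
      rw [Finset.sum_eq_single j (fun b _ hb => by
        rw [if_neg (fun hc => hb (Fin.ext hc))]) (fun h => absurd (Finset.mem_univ j) h)]
      rw [if_pos rfl]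
    have hzcoeff2 : ∀ k, m ≤ k → zp.coeff k = 0 := by
      intro k hk
      rw [hzc]
      apply Finset.sum_eq_zero
      intro j _
      have := j.isLt
      rw [if_neg (by omega)]
    have hzpne : zp ≠ 0 := by
      intro h
      apply hz0
      funext j
      rw [show z j = zp.coeff (j:ℕ) from (hzcoeff1 j).symm, h, coeff_zero]
      rfl
    have hzpdeg : zp.natDegree < m := by
      by_contra hcon2
      push_neg at hcon2
      have h5 := hzcoeff2 _ hcon2
      exact (Polynomial.leadingCoeff_ne_zero.mpr hzpne) h5
    have hmv := poly_mulVec fK (derivative fK) zp hzpdeg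
    rw [show (fun j : Fin m => zp.coeff (j:ℕ)) = z from funext hzcoeff1, ← hAK, hz] at hmv
    have hr0 : (derivative fK * zp) %ₘ fK = 0 := by
      apply Polynomial.ext
      intro k
      rw [coeff_zero]
      rcases lt_or_ge k m with hk | hk
      · have h6 := congrFun hmv (⟨k, hk⟩ : Fin m)
        simpa using h6.symm
      · apply Polynomial.coeff_eq_zero_of_natDegree_lt
        rcases eq_or_ne ((derivative fK * zp) %ₘ fK) 0 with h0 | h0
        · rw [h0, Polynomial.natDegree_zero]; omega
        · have hdm := Polynomial.degree_modByMonic_lt (derivative fK * zp) hmonK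
          have h7 := Polynomial.natDegree_lt_natDegree h0 hdm
          rw [hdegK] at h7
          omega
    have hdvdmul : fK ∣ derivative fK * zp := (Polynomial.modByMonic_eq_zero_iff_dvd hmonK).mp hr0
    have h8 : fK ∣ zp := hco.dvd_of_dvd_mul_left hdvdmul
    have hle := Polynomial.natDegree_le_of_dvd h8 hzpne
    rw [hdegK] at hle
    omega
  have hdunit : ¬ IsUnit d := fun h => hnotco (EuclideanDomain.gcd_isUnit_iff.mp (hddef ▸ h))
  have hddeg_ge : 1 ≤ d.natDegree := by
    by_contra h
    push_neg at h
    have h0 : d.natDegree = 0 := by omega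
    apply hdunit
    rw [Polynomial.eq_C_of_natDegree_eq_zero h0]
    refine Polynomial.isUnit_C.mpr (isUnit_iff_ne_zero.mpr ?_)
    intro hc
    apply hd0
    rw [Polynomial.eq_C_of_natDegree_eq_zero h0, hc, map_zero]
  -- direction 2 : gcd cannot have degree ≥ 2
  have hddeg_le : d.natDegree ≤ 1 := by
    by_contra hcon
    push_neg at hcon
    obtain ⟨w, hw⟩ := hdl
    have hw0 : w ≠ 0 := by
      rintro rfl
      rw [mul_zero] at hw
      exact hK0 hw
    have hdeg_sum : d.natDegree + w.natDegree = m := by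
      rw [← hdegK, hw, Polynomial.natDegree_mul hd0 hw0]
    obtain ⟨w', hw'⟩ := hdr
    have hdvd1 : fK ∣ derivative fK * w := ⟨w', by rw [hw', hw]; ring⟩
    have hdvd2 : fK ∣ derivative fK * (X * w) := ⟨w' * X, by rw [hw', hw]; ring⟩
    have hdegw : w.natDegree < m := by omega
    have hdegXw : (X * w).natDegree < m := by
      rw [Polynomial.natDegree_X_mul hw0]
      omega
    have hmv1 := poly_mulVec fK (derivative fK) w hdegw
    have hmv2 := poly_mulVec fK (derivative fK) (X * w) hdegXw
    rw [(Polynomial.modByMonic_eq_zero_iff_dvd hmonK).mpr hdvd1] at hmv1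
    rw [(Polynomial.modByMonic_eq_zero_iff_dvd hmonK).mpr hdvd2] at hmv2
    rw [← hAK] at hmv1 hmv2
    have hmv1' : (A.map (Int.castRingHom (ZMod p))).mulVec (fun j : Fin m => w.coeff (j:ℕ)) = 0 := by
      rw [hmv1]
      funext i
      simp
    have hmv2' : (A.map (Int.castRingHom (ZMod p))).mulVec
        (fun j : Fin m => (X * w).coeff (j:ℕ)) = 0 := by
      rw [hmv2]
      funext i
      simp
    have hli : LinearIndependent (ZMod p) ![fun j : Fin m => w.coeff (j:ℕ),
        fun j : Fin m => (X * w).coeff (j:ℕ)] := by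
      rw [LinearIndependent.pair_iff]
      intro s t hst
      have hq0 : (C s + C t * X) * w = 0 := by
        apply Polynomial.ext
        intro k
        rw [coeff_zero]
        rcases lt_or_ge k m with hk | hk
        · have h9 := congrFun hst (⟨k, hk⟩ : Fin m)
          simp only [Pi.add_apply, Pi.smul_apply, smul_eq_mul, Pi.zero_apply,
            Matrix.cons_val_zero, Matrix.cons_val_one, Matrix.head_cons] at h9
          rw [show (C s + C t * X) * w = C s * w + C t * (X * w) by ring]
          rw [Polynomial.coeff_add, Polynomial.coeff_C_mul, Polynomial.coeff_C_mul]
          exact h9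
        · apply Polynomial.coeff_eq_zero_of_natDegree_lt
          have hb1 : ((C s + C t * X) * w).natDegree ≤ (C s + C t * X).natDegree + w.natDegree :=
            Polynomial.natDegree_mul_le
          have hb2 : (C s + C t * X).natDegree ≤ 1 := by
            refine le_trans (Polynomial.natDegree_add_le _ _) (max_le ?_ ?_)
            · simp
            · exact le_trans (Polynomial.natDegree_C_mul_le _ _) (by simp)
          omega
      rcases mul_eq_zero.mp hq0 with h | h
      · have hs := congrArg (fun q : Polynomial (ZMod p) => q.coeff 0) h
        have ht := congrArg (fun q : Polynomial (ZMod p) => q.coeff 1) h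
        simp only [Polynomial.coeff_add, Polynomial.coeff_C_mul, Polynomial.coeff_C,
          Polynomial.coeff_X_zero, Polynomial.coeff_X_one, Polynomial.coeff_zero,
          mul_zero, add_zero, mul_one, if_pos, if_neg one_ne_zero] at hs ht
        exact ⟨hs, by simpa using ht⟩
      · exact absurd h hw0
    exact hndvdA (kernel_pair_sq_dvd hp A hli hmv1' hmv2')
  have hddeg : d.natDegree = 1 := le_antisymm hddeg_le hddeg_ge
  -- the root of the gcd
  have hc1 : d.coeff 1 ≠ 0 := by
    have h10 := Polynomial.leadingCoeff_ne_zero.mpr hd0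
    rwa [Polynomial.leadingCoeff, hddeg] at h10
  set lam0 : ZMod p := -d.coeff 0 / d.coeff 1 with hlam0def
  have hdroot : d.IsRoot lam0 := by
    have hdeq := Polynomial.eq_X_add_C_of_natDegree_le_one (le_of_eq hddeg)
    rw [Polynomial.IsRoot]
    conv_lhs => rw [hdeq]
    simp only [Polynomial.eval_add, Polynomial.eval_mul, Polynomial.eval_C, Polynomial.eval_X]
    rw [hlam0def]
    field_simp
    ring
  have hXd : (X - C lam0) ∣ d := Polynomial.dvd_iff_isRoot.mpr hdroot
  have hXf : (X - C lam0) ∣ fK := hXd.trans hdl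
  have hXf' : (X - C lam0) ∣ derivative fK := hXd.trans hdr
  set e : ℕ := Polynomial.rootMultiplicity lam0 fK with hedef
  set u : Polynomial (ZMod p) := fK /ₘ (X - C lam0) ^ e with hudef
  have hfu : (X - C lam0) ^ e * u = fK := Polynomial.pow_mul_divByMonic_rootMultiplicity_eq fK lam0
  have hueval : u.eval lam0 ≠ 0 :=
    Polynomial.eval_divByMonic_pow_rootMultiplicity_ne_zero lam0 hK0
  have he1 : 1 ≤ e := (Polynomial.rootMultiplicity_pos hK0).mpr (Polynomial.dvd_iff_isRoot.mp hXf)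
  obtain ⟨k, hk⟩ : ∃ k, e = k + 1 := ⟨e - 1, by omega⟩
  have hder : derivative fK = (X - C lam0)^k
      * (C (((k+1:ℕ)) : ZMod p) * u + (X - C lam0) * derivative u) := by
    conv_lhs => rw [← hfu, hk]
    rw [Polynomial.derivative_mul, Polynomial.derivative_pow, Polynomial.derivative_X_sub_C,
      Nat.add_sub_cancel, pow_succ]
    ring
  have hfeval' : (derivative fK).eval lam0 = 0 := Polynomial.dvd_iff_isRoot.mp hXf'
  have hk1 : 1 ≤ k := by
    by_contra hcon
    push_neg at hcon
    have hk0 : k = 0 := by omega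
    rw [hder, hk0] at hfeval'
    simp only [pow_zero, one_mul, Polynomial.eval_add, Polynomial.eval_mul, Polynomial.eval_C,
      Polynomial.eval_sub, Polynomial.eval_X, sub_self, zero_mul, add_zero] at hfeval'
    norm_num at hfeval'
    exact hueval hfeval'
  have hk2 : k ≤ 1 := by
    by_contra hcon
    push_neg at hcon
    have h2f : (X - C lam0)^2 ∣ fK := by
      rw [← hfu, hk]
      exact dvd_mul_of_dvd_left (pow_dvd_pow _ (by omega)) _
    have h2f' : (X - C lam0)^2 ∣ derivative fK := by
      rw [hder]
      exact dvd_mul_of_dvd_left (pow_dvd_pow _ (by omega)) _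
    have h2d : (X - C lam0)^2 ∣ d := EuclideanDomain.dvd_gcd h2f h2f'
    have h11 := Polynomial.natDegree_le_of_dvd h2d hd0
    rw [Polynomial.natDegree_pow, Polynomial.natDegree_X_sub_C, hddeg] at h11
    omega
  have hke : k = 1 := le_antisymm hk2 hk1
  have hfu2 : (X - C lam0)^2 * u = fK := by
    rw [← hfu, hk, hke]
  have hder2 : derivative fK = (X - C lam0)
      * (C (((2:ℕ)) : ZMod p) * u + (X - C lam0) * derivative u) := by
    rw [hder, hke, pow_one]
  -- u is squarefree
  have hsf : Squarefree u := by
    intro x hxx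
    by_contra hxu
    have hx0 : x ≠ 0 := by
      rintro rfl
      rw [mul_zero] at hxx
      have hu0 := zero_dvd_iff.mp hxx
      rw [hu0] at hueval
      simp at hueval
    obtain ⟨t, ht⟩ := hxx
    have hxdu : x ∣ u := ⟨x * t, by rw [ht]; ring⟩
    have hxdu' : x ∣ derivative u := by
      refine ⟨derivative x * t + derivative x * t + x * derivative t, ?_⟩
      rw [ht, Polynomial.derivative_mul, Polynomial.derivative_mul]
      ring
    have hxf : x ∣ fK := by
      rw [← hfu2]
      exact Dvd.dvd.mul_left hxdu _
    have hxf' : x ∣ derivative fK := by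
      rw [hder2]
      apply Dvd.dvd.mul_left
      exact dvd_add (hxdu.mul_left _) (hxdu'.mul_left _)
    have hxd : x ∣ d := EuclideanDomain.dvd_gcd hxf hxf'
    have hxdeg_le : x.natDegree ≤ 1 := hddeg ▸ Polynomial.natDegree_le_of_dvd hxd hd0
    obtain ⟨s, hs⟩ := hxd
    have hs0 : s ≠ 0 := by
      rintro rfl
      rw [mul_zero] at hs
      exact hd0 hs
    have hsdeg : s.natDegree = 0 := by
      have h12 := Polynomial.natDegree_mul hx0 hs0
      rw [← hs, hddeg] at h12
      have hxdeg_ge : 1 ≤ x.natDegree := by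
        by_contra hcon
        push_neg at hcon
        have h0 : x.natDegree = 0 := by omega
        apply hxu
        rw [Polynomial.eq_C_of_natDegree_eq_zero h0]
        refine Polynomial.isUnit_C.mpr (isUnit_iff_ne_zero.mpr ?_)
        intro hc
        apply hx0
        rw [Polynomial.eq_C_of_natDegree_eq_zero h0, hc, map_zero]
      omega
    have hsu : IsUnit s := by
      rw [Polynomial.eq_C_of_natDegree_eq_zero hsdeg]
      refine Polynomial.isUnit_C.mpr (isUnit_iff_ne_zero.mpr ?_)
      intro hc
      apply hs0
      rw [Polynomial.eq_C_of_natDegree_eq_zero hsdeg, hc, map_zero]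
    obtain ⟨s', hs'⟩ := hsu.exists_right_inv
    have hdx : d ∣ x := ⟨s', by rw [hs, mul_assoc, hs', mul_one]⟩
    have hXu : (X - C lam0) ∣ u := (hXd.trans hdx).trans hxdu
    exact hueval (Polynomial.dvd_iff_isRoot.mp hXu)
  -- assemble the answer
  set lam : ℤ := (ZMod.cast lam0 : ℤ) with hlamdef
  have hlamc : ((lam : ℤ) : ZMod p) = lam0 := ZMod.intCast_zmod_cast lam0
  obtain ⟨φ, hφ⟩ := Polynomial.map_surjective (Int.castRingHom (ZMod p))
    ZMod.intCast_surjective u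
  refine ⟨lam, φ, ?_, ?_, ?_⟩
  · rw [hφ, hlamc]
    exact hfu2.symm
  · rw [hφ]
    exact hsf
  · intro hcon
    have h0 : ((φ.eval lam : ℤ) : ZMod p) = 0 := (ZMod.intCast_zmod_eq_zero_iff_dvd _ _).mpr hcon
    apply hueval
    calc u.eval lam0 = (φ.map (Int.castRingHom (ZMod p))).eval (((lam : ℤ) : ZMod p)) := by
          rw [hφ, hlamc]
      _ = ((φ.eval lam : ℤ) : ZMod p) := by
          rw [Polynomial.eval_map]
          exact Polynomial.eval₂_at_apply (Int.castRingHom (ZMod p)) lam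
      _ = 0 := h0
end

section
/- Let M be an n×n symmetric integer matrix and p an odd prime. Suppose χ(M;x) ≡ (x − λ₀)²·φ(x) (mod p) for some integer λ₀ and φ(x) ∈ ℤ[x], where φ(x) is squarefree over 𝔽_p and φ(λ₀) ≢ 0 (mod p). Then the congruence χ(M;x)·u(x) ≡ χ′(M;x)·v(x) (mod p²) has a solution (u(x), v(x)) ∈ ℤ[x]² with u(x) ≢ 0 (mod p), v(x) ≢ 0 (mod p), deg u(x) < n−1, and deg v(x) < n, if and only if p² divides det(M − λ₀I). -/
open Polynomial Matrix

section ZModHelp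
variable (p : ℕ) [Fact p.Prime]

noncomputable def pih (p:ℕ) [NeZero p] : ZMod (p^2) →+* ZMod p :=
  ZMod.castHom (dvd_pow_self p two_ne_zero) (ZMod p)

instance : NeZero (p^2) := ⟨pow_ne_zero 2 (Fact.out : p.Prime).ne_zero⟩

lemma pi_p : pih p (p : ZMod (p^2)) = 0 := by
  simp [pih]

lemma pi_eq_zero_iff (a : ZMod (p^2)) : pih p a = 0 ↔ (p : ZMod (p^2)) ∣ a := by
  constructor
  · intro h
    have hv : a = ((a.val : ℕ) : ZMod (p^2)) := by simp [ZMod.natCast_val, ZMod.cast_id]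
    have h2 : (pih p) a = ((a.val : ℕ) : ZMod p) := by
      conv_lhs => rw [hv]
      simp [pih]
    rw [h2] at h
    obtain ⟨c, hc⟩ := (ZMod.natCast_eq_zero_iff _ _).mp h
    exact ⟨(c : ZMod (p^2)), by rw [hv, hc]; push_cast; ring⟩
  · rintro ⟨b, rfl⟩
    rw [map_mul (pih p), pi_p]; ring

lemma p_mul_eq_zero_iff (a : ZMod (p^2)) : (p : ZMod (p^2)) * a = 0 ↔ pih p a = 0 := by
  have hp := (Fact.out : p.Prime)
  constructor
  · intro h
    have hv : a = ((a.val : ℕ) : ZMod (p^2)) := by simp [ZMod.natCast_val, ZMod.cast_id]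
    rw [hv] at h
    have : ((p * a.val : ℕ) : ZMod (p^2)) = 0 := by push_cast; exact h
    have hdvd : p^2 ∣ p * a.val := (ZMod.natCast_eq_zero_iff _ _).mp this
    have : p ∣ a.val := by
      rcases hdvd with ⟨c, hc⟩
      refine ⟨c, ?_⟩
      have h3 : p * a.val = p * (p * c) := by rw [hc]; ring
      exact Nat.eq_of_mul_eq_mul_left hp.pos h3
    rw [pi_eq_zero_iff]
    obtain ⟨c, hc⟩ := this
    exact ⟨(c : ZMod (p^2)), by rw [hv, hc]; push_cast; ring⟩
  · intro h
    obtain ⟨b, rfl⟩ := (pi_eq_zero_iff p a).mp h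
    rw [← mul_assoc, ← Nat.cast_mul, ← pow_two, ZMod.natCast_self, zero_mul]

lemma pi_surj : Function.Surjective (pih p) := by
  intro x
  exact ⟨((x.val : ℕ) : ZMod (p^2)), by simp [pih, ZMod.natCast_val, ZMod.cast_id']⟩

-- polynomial versions
lemma map_pi_eq_zero_iff (A : Polynomial (ZMod (p^2))) :
    A.map (pih p) = 0 ↔ (C (p : ZMod (p^2))) ∣ A := by
  rw [Polynomial.C_dvd_iff_dvd_coeff]
  constructor
  · intro h i
    have : (A.map (pih p)).coeff i = 0 := by rw [h]; simp
    rw [Polynomial.coeff_map] at this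
    exact (pi_eq_zero_iff p _).mp this
  · intro h
    ext i
    rw [Polynomial.coeff_map]
    simp only [Polynomial.coeff_zero]
    exact (pi_eq_zero_iff p _).mpr (h i)

lemma pC_mul_eq_zero_iff (A : Polynomial (ZMod (p^2))) :
    C (p : ZMod (p^2)) * A = 0 ↔ A.map (pih p) = 0 := by
  constructor
  · intro h
    ext i
    rw [Polynomial.coeff_map]
    simp only [Polynomial.coeff_zero]
    rw [← p_mul_eq_zero_iff]
    have : (C (p : ZMod (p^2)) * A).coeff i = 0 := by rw [h]; simp
    rwa [Polynomial.coeff_C_mul] at this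
  · intro h
    ext i
    rw [Polynomial.coeff_C_mul]
    simp only [Polynomial.coeff_zero]
    rw [p_mul_eq_zero_iff]
    have : (A.map (pih p)).coeff i = 0 := by rw [h]; simp
    rwa [Polynomial.coeff_map] at this

lemma p_mul_poly_eq_iff (A B : Polynomial (ZMod (p^2))) :
    C (p : ZMod (p^2)) * A = C (p : ZMod (p^2)) * B ↔ A.map (pih p) = B.map (pih p) := by
  rw [← sub_eq_zero, ← mul_sub, pC_mul_eq_zero_iff, Polynomial.map_sub, sub_eq_zero]

end ZModHelp

section CharpolyEval
lemma charpoly_eval_eq (n : ℕ) (M : Matrix (Fin n) (Fin n) ℤ) (t : ℤ) :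
    M.charpoly.eval t = (t • (1 : Matrix (Fin n) (Fin n) ℤ) - M).det := by
  rw [Matrix.charpoly, ← Polynomial.coe_evalRingHom, RingHom.map_det]
  congr 1
  rw [Matrix.smul_one_eq_diagonal]
  ext i j
  by_cases h : i = j
  · subst h; simp [charmatrix_apply_eq, Matrix.diagonal_apply_eq]
  · simp [charmatrix_apply_ne _ _ _ h, Matrix.diagonal_apply_ne _ h]
end CharpolyEval

lemma wb_lt_succ (x : WithBot ℕ) (k : ℕ) :
    x < ((k+1 : ℕ) : WithBot ℕ) ↔ x ≤ ((k : ℕ) : WithBot ℕ) := by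
  constructor
  · intro h
    cases x with
    | bot => exact bot_le
    | coe a =>
      exact Nat.cast_le.mpr (Nat.lt_succ_iff.mp (Nat.cast_lt.mp h))
  · intro h
    exact lt_of_le_of_lt h (Nat.cast_lt.mpr (Nat.lt_succ_self k))

section Core
open Polynomial
variable (p m : ℕ) [Fact p.Prime]

lemma core (hodd : Odd p) (q : Polynomial (ZMod (p^2))) (hq_monic : q.Monic)
    (hqdeg : q.natDegree = m + 2) (lamR : ZMod (p^2)) (Φ : Polynomial (ZMod p))
    (hfac : q.map (pih p) = (X - C (pih p lamR))^2 * Φ)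
    (hsf : Squarefree Φ) (hΦ : Φ.eval (pih p lamR) ≠ 0) :
    (∃ U V : Polynomial (ZMod (p^2)), q * U = derivative q * V ∧
      U.map (pih p) ≠ 0 ∧ V.map (pih p) ≠ 0 ∧
      U.degree < ((m+1 : ℕ) : WithBot ℕ) ∧ V.degree < ((m+2 : ℕ) : WithBot ℕ)) ↔
    q.eval lamR = 0 := by
  have hp : p.Prime := Fact.out
  haveI : Fact (1 < p^2) := ⟨by nlinarith [hp.two_le]⟩
  set π := pih p with hπ
  set lamk := π lamR with hlamk
  -- basic facts in k[X]
  have hQmap_monic : (q.map π).Monic := hq_monic.map π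
  have hΦ_ne : Φ ≠ 0 := fun h => hΦ (by simp [h])
  have hΦ_monic : Φ.Monic := by
    have h1 : ((X - C lamk)^2).Monic := (monic_X_sub_C lamk).pow 2
    refine h1.of_mul_monic_left ?_
    rw [← hfac]; exact hQmap_monic
  have hΦdeg : Φ.natDegree = m := by
    have h1 : (q.map π).natDegree = m + 2 := by
      rw [hq_monic.natDegree_map]; exact hqdeg
    rw [hfac] at h1
    have h2 : ((X - C lamk)^2).natDegree = 2 := by
      simp [natDegree_pow]
    rw [natDegree_mul (pow_ne_zero 2 (X_sub_C_ne_zero lamk)) hΦ_ne, h2] at h1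
    omega
  have htwo : (2 : ZMod p) ≠ 0 := by
    have : ((2:ℕ) : ZMod p) ≠ 0 := by
      rw [Ne, ZMod.natCast_eq_zero_iff]
      intro h
      have h2 : p = 2 := (Nat.prime_dvd_prime_iff_eq hp Nat.prime_two).mp h
      rw [h2] at hodd
      simp [Nat.odd_iff] at hodd
    simpa using this
  -- A and B
  set A : Polynomial (ZMod p) := (X - C lamk) * Φ with hA
  set B : Polynomial (ZMod p) := C 2 * Φ + (X - C lamk) * derivative Φ with hB
  have hBeval : B.eval lamk = 2 * Φ.eval lamk := by simp [hB]
  have hBeval_ne : B.eval lamk ≠ 0 := by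
    rw [hBeval]; exact mul_ne_zero htwo hΦ
  have hB_ne : B ≠ 0 := fun h => hBeval_ne (by simp [h])
  have hAeval : A.eval lamk = 0 := by simp [hA]
  have hA_monic : A.Monic := (monic_X_sub_C lamk).mul hΦ_monic
  have hA_ne : A ≠ 0 := hA_monic.ne_zero
  have hAdeg : A.natDegree = m + 1 := by
    rw [hA, natDegree_mul (X_sub_C_ne_zero lamk) hΦ_ne, natDegree_X_sub_C, hΦdeg]; omega
  have hBdeg : B.degree ≤ (m : WithBot ℕ) := by
    refine le_trans (degree_add_le _ _) (max_le ?_ ?_)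
    · refine le_trans (degree_mul_le _ _) ?_
      refine le_trans (add_le_add degree_C_le degree_le_natDegree) ?_
      simp [hΦdeg]
    · by_cases hd : derivative Φ = 0
      · simp [hd]
      · have hm : 1 ≤ m := by
          rcases Nat.eq_zero_or_pos m with h0 | h
          · exfalso; apply hd
            rw [eq_C_of_natDegree_eq_zero (by omega : Φ.natDegree = 0)]
            simp
          · exact h
        refine le_trans (degree_mul_le _ _) ?_
        have h1 : (derivative Φ).degree ≤ ((m - 1 : ℕ) : WithBot ℕ) := by
          rw [← natDegree_le_iff_degree_le]
          refine le_trans (natDegree_derivative_le Φ) ?_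
          rw [hΦdeg]
        refine le_trans (add_le_add (degree_X_sub_C lamk).le h1) ?_
        rw [← Nat.cast_one, ← Nat.cast_add, Nat.cast_le]
        omega
  -- coprimality
  have hcop1 : IsCoprime (X - C lamk) B := by
    rw [(irreducible_X_sub_C lamk).coprime_iff_not_dvd, dvd_iff_isRoot]
    exact fun h => hBeval_ne h
  have hcopXΦ : IsCoprime (X - C lamk) Φ := by
    rw [(irreducible_X_sub_C lamk).coprime_iff_not_dvd, dvd_iff_isRoot]
    exact fun h => hΦ h
  have hcopΦd : IsCoprime Φ (derivative Φ) :=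
    PerfectField.separable_iff_squarefree.mpr hsf
  have hcop2 : IsCoprime Φ B := by
    have h1 : IsCoprime Φ ((X - C lamk) * derivative Φ) := hcopXΦ.symm.mul_right hcopΦd
    have h2 := h1.add_mul_left_right (C 2)
    have : (X - C lamk) * derivative Φ + Φ * C 2 = B := by rw [hB]; ring
    rwa [this] at h2
  have hcopAB : IsCoprime A B := hcop1.mul_left hcop2
  -- monic lift of Φ
  obtain ⟨Φt, hΦt_map, hΦt_deg, hΦt_monic⟩ :=
    lifts_and_degree_eq_and_monic ((mem_lifts Φ).mpr ((Polynomial.map_surjective π (pi_surj p)) Φ)) hΦ_monic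
  have hΦtdeg : Φt.natDegree = m := by
    have := hΦt_monic.natDegree_map π
    rw [hΦt_map] at this; omega
  -- the decomposition q = (X - lam)^2 Φt + p W
  set D : Polynomial (ZMod (p^2)) := q - (X - C lamR)^2 * Φt with hD
  have hSmap : ((X - C lamR)^2 * Φt).map π = (X - C lamk)^2 * Φ := by
    simp [Polynomial.map_mul, Polynomial.map_pow, Polynomial.map_sub, hΦt_map, hlamk]
  have hDmap : D.map π = 0 := by
    rw [hD, Polynomial.map_sub, hSmap, hfac, sub_self]
  obtain ⟨W, hW⟩ := (map_pi_eq_zero_iff p D).mp hDmap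
  have hq_dec : q = (X - C lamR)^2 * Φt + C (p : ZMod (p^2)) * W := by
    rw [← hW, hD]; ring
  have hSdeg : ((X - C lamR)^2 * Φt).natDegree = m + 2 := by
    rw [((monic_X_sub_C lamR).pow 2).natDegree_mul hΦt_monic, hΦtdeg,
      (monic_X_sub_C lamR).natDegree_pow, natDegree_X_sub_C]
    omega
  have hS_monic : ((X - C lamR)^2 * Φt).Monic := ((monic_X_sub_C lamR).pow 2).mul hΦt_monic
  have hqdeg' : q.degree = ((m+2:ℕ) : WithBot ℕ) := by
    rw [degree_eq_natDegree hq_monic.ne_zero, hqdeg]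
  have hSdeg' : ((X - C lamR)^2 * Φt).degree = ((m+2:ℕ) : WithBot ℕ) := by
    rw [degree_eq_natDegree hS_monic.ne_zero, hSdeg]
  have hDdeg : D.degree < ((m + 2 : ℕ) : WithBot ℕ) := by
    calc D.degree < q.degree := by
          rw [hD]
          exact degree_sub_lt (hqdeg'.trans hSdeg'.symm) hq_monic.ne_zero
            (by rw [hq_monic.leadingCoeff, hS_monic.leadingCoeff])
      _ = ((m+2:ℕ) : WithBot ℕ) := hqdeg'
  -- the reduction of W mod p
  set w := W.map π with hw
  have hwdeg : w.degree < ((m+2 : ℕ) : WithBot ℕ) := by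
    rw [degree_lt_iff_coeff_zero]
    intro j hj
    have hD0 : D.coeff j = 0 :=
      coeff_eq_zero_of_degree_lt (lt_of_lt_of_le hDdeg (Nat.cast_le.mpr hj))
    rw [hW, coeff_C_mul] at hD0
    have := (p_mul_eq_zero_iff p (W.coeff j)).mp hD0
    rw [hw, coeff_map]
    exact this
  -- decompositions over R (with explicit "At/Bt" bodies)
  have hq_dec' : q = (X - C lamR) * ((X - C lamR) * Φt) + C (p : ZMod (p^2)) * W := by
    rw [hq_dec]; ring
  have hq'_dec : derivative q =
      (X - C lamR) * (C 2 * Φt + (X - C lamR) * derivative Φt)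
        + C (p : ZMod (p^2)) * derivative W := by
    rw [hq_dec, derivative_add, derivative_C_mul, derivative_mul, derivative_pow,
      derivative_sub, derivative_X, derivative_C]
    push_cast
    ring
  have hmap2 : π (2 : ZMod (p^2)) = 2 := map_ofNat π 2
  have hAtmap : ((X - C lamR) * Φt).map π = A := by
    simp only [Polynomial.map_mul, Polynomial.map_sub, map_X, map_C, hΦt_map, ← hlamk, hA]
  have hBtmap : ((C 2 * Φt + (X - C lamR) * derivative Φt)).map π = B := by
    simp only [Polynomial.map_add, Polynomial.map_mul, Polynomial.map_sub, map_X, map_C,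
      hΦt_map, ← derivative_map, hmap2, ← hlamk, hB]
  have hAt_monic : ((X - C lamR) * Φt).Monic := (monic_X_sub_C lamR).mul hΦt_monic
  have hAtdeg : ((X - C lamR) * Φt).natDegree = m + 1 := by
    rw [(monic_X_sub_C lamR).natDegree_mul hΦt_monic, natDegree_X_sub_C, hΦtdeg]
    omega
  have hBtdeg : (C (2 : ZMod (p^2)) * Φt + (X - C lamR) * derivative Φt).degree
      ≤ ((m:ℕ) : WithBot ℕ) := by
    refine le_trans (degree_add_le _ _) (max_le ?_ ?_)
    · refine le_trans (degree_mul_le _ _) ?_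
      refine le_trans (add_le_add degree_C_le degree_le_natDegree) ?_
      simp [hΦtdeg]
    · by_cases hd : derivative Φt = 0
      · simp [hd]
      · have hm : 1 ≤ m := by
          rcases Nat.eq_zero_or_pos m with h0 | h
          · exfalso; apply hd
            rw [eq_C_of_natDegree_eq_zero (by omega : Φt.natDegree = 0)]
            simp
          · exact h
        refine le_trans (degree_mul_le _ _) ?_
        have h1 : (derivative Φt).degree ≤ ((m - 1 : ℕ) : WithBot ℕ) := by
          rw [← natDegree_le_iff_degree_le]
          refine le_trans (natDegree_derivative_le Φt) ?_
          rw [hΦtdeg]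
        refine le_trans (add_le_add (degree_X_sub_C lamR).le h1) ?_
        rw [← Nat.cast_one, ← Nat.cast_add, Nat.cast_le]
        omega
  have hpp : (p : ZMod (p^2)) * (p : ZMod (p^2)) = 0 := by
    rw [← Nat.cast_mul, ← pow_two, ZMod.natCast_self]
  have hCC : C (p : ZMod (p^2)) * C (p : ZMod (p^2)) = (0 : Polynomial (ZMod (p^2))) := by
    rw [← C_mul, hpp, map_zero]
  have hqeval : q.eval lamR = (p : ZMod (p^2)) * W.eval lamR := by
    rw [hq_dec]
    simp
  have hWeval_pi : w.eval lamk = π (W.eval lamR) := by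
    rw [hw, hlamk, eval_map, eval₂_at_apply]
  have hkey : q.eval lamR = 0 ↔ w.eval lamk = 0 := by
    rw [hqeval, p_mul_eq_zero_iff, hWeval_pi]
  have hQ'map : (derivative q).map π = (X - C lamk) * B := by
    rw [← derivative_map, hfac, derivative_mul, derivative_pow, derivative_sub,
      derivative_X, derivative_C, hB]
    push_cast
    ring
  constructor
  · -- forward direction
    rintro ⟨U, V, hUV, hU0, hV0, _hUdeg, hVdeg⟩
    have hQmap : q.map π = (X - C lamk) * A := by rw [hfac, hA]; ring
    have h2 : A * U.map π = B * V.map π := by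
      have h3 := congrArg (Polynomial.map π) hUV
      rw [Polynomial.map_mul, Polynomial.map_mul, hQmap, hQ'map] at h3
      refine mul_left_cancel₀ (X_sub_C_ne_zero lamk) ?_
      linear_combination h3
    have hAv : A ∣ V.map π := hcopAB.dvd_of_dvd_mul_left ⟨U.map π, h2.symm⟩
    obtain ⟨t, ht⟩ := hAv
    have ht_ne : t ≠ 0 := by rintro rfl; rw [mul_zero] at ht; exact hV0 ht
    have hdegv₀ : (V.map π).natDegree < m + 2 := by
      refine (natDegree_lt_iff_degree_lt hV0).mpr ?_
      exact lt_of_le_of_lt degree_map_le hVdeg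
    have hnt : t.natDegree = 0 := by
      have h3 := natDegree_mul hA_ne ht_ne
      rw [← ht, hAdeg] at h3
      omega
    have htC : t = C (t.coeff 0) := eq_C_of_natDegree_eq_zero hnt
    set c := t.coeff 0 with hc
    have hc_ne : c ≠ 0 := fun h => ht_ne (by rw [htC, h, map_zero])
    have hu₀B : U.map π = B * C c := by
      refine mul_left_cancel₀ hA_ne ?_
      rw [h2, ht, htC]; ring
    obtain ⟨ct, hct⟩ := pi_surj p c
    have hU1 : (U - C ct * (C 2 * Φt + (X - C lamR) * derivative Φt)).map π = 0 := by
      rw [Polynomial.map_sub, Polynomial.map_mul, map_C, hct, hBtmap, hu₀B]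
      ring
    have hV1 : (V - C ct * ((X - C lamR) * Φt)).map π = 0 := by
      rw [Polynomial.map_sub, Polynomial.map_mul, map_C, hct, hAtmap, ht, htC]
      ring
    obtain ⟨U₁, hU₁⟩ := (map_pi_eq_zero_iff p _).mp hU1
    obtain ⟨V₁, hV₁⟩ := (map_pi_eq_zero_iff p _).mp hV1
    have hUrep : U = C ct * (C 2 * Φt + (X - C lamR) * derivative Φt)
        + C (p : ZMod (p^2)) * U₁ := by rw [← hU₁]; ring
    have hVrep : V = C ct * ((X - C lamR) * Φt) + C (p : ZMod (p^2)) * V₁ := by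
      rw [← hV₁]; ring
    have h0 : ((X - C lamR) * ((X - C lamR) * Φt) + C (p : ZMod (p^2)) * W)
          * (C ct * (C 2 * Φt + (X - C lamR) * derivative Φt) + C (p : ZMod (p^2)) * U₁)
        - ((X - C lamR) * (C 2 * Φt + (X - C lamR) * derivative Φt)
            + C (p : ZMod (p^2)) * derivative W)
          * (C ct * ((X - C lamR) * Φt) + C (p : ZMod (p^2)) * V₁) = 0 := by
      rw [← hq_dec', ← hq'_dec, ← hUrep, ← hVrep, hUV]; ring
    have hexp : C (p : ZMod (p^2)) *
        ((X - C lamR) * ((X - C lamR) * Φt) * U₁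
          + C ct * (W * (C 2 * Φt + (X - C lamR) * derivative Φt))
          - (X - C lamR) * (C 2 * Φt + (X - C lamR) * derivative Φt) * V₁
          - C ct * (derivative W * ((X - C lamR) * Φt))) = 0 := by
      linear_combination h0 + (derivative W * V₁ - W * U₁) * hCC
    have hE := (pC_mul_eq_zero_iff p _).mp hexp
    simp only [Polynomial.map_sub, Polynomial.map_add, Polynomial.map_mul, map_C, map_X,
      hΦt_map, ← derivative_map, hmap2, hct, ← hw, ← hlamk] at hE
    have h5 := congrArg (eval lamk) hE
    simp only [eval_sub, eval_add, eval_mul, eval_X, eval_C, eval_zero] at h5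
    have h6 : c * (w.eval lamk * (2 * Φ.eval lamk)) = 0 := by
      rw [← hπ, hΦt_map, hmap2] at h5
      linear_combination h5
    have hwl : w.eval lamk = 0 := by
      rcases mul_eq_zero.mp h6 with h7 | h7
      · exact absurd h7 hc_ne
      rcases mul_eq_zero.mp h7 with h8 | h8
      · exact h8
      · rcases mul_eq_zero.mp h8 with h9 | h9
        · exact absurd h9 htwo
        · exact absurd h9 hΦ
    exact hkey.mpr hwl
  · -- converse direction
    intro hev
    have hwl : w.eval lamk = 0 := hkey.mp hev
    have hGeval : (derivative w * A - w * B).IsRoot lamk := by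
      simp [IsRoot, hAeval, hwl]
    obtain ⟨ψ, hψ⟩ := dvd_iff_isRoot.mpr hGeval
    obtain ⟨a, b, hab⟩ := hcopAB
    have hmoddiv : (-(b*ψ)) %ₘ A + A * ((-(b*ψ)) /ₘ A) = -(b*ψ) :=
      modByMonic_add_div (-(b*ψ)) A
    set v₁ := (-(b*ψ)) %ₘ A with hv₁
    set u₁ := a*ψ - B * ((-(b*ψ)) /ₘ A) with hu₁
    have hsol : A * u₁ - B * v₁ = ψ := by
      rw [hu₁]
      linear_combination ψ * hab - B * hmoddiv
    have hv₁deg : v₁.degree < ((m+1 : ℕ) : WithBot ℕ) := by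
      have h3 := degree_modByMonic_lt (-(b*ψ)) hA_monic
      rwa [degree_eq_natDegree hA_ne, hAdeg] at h3
    have hwnd : w.degree ≤ ((m+1 : ℕ) : WithBot ℕ) := (wb_lt_succ _ _).mp hwdeg
    have hw'deg : (derivative w).degree ≤ ((m : ℕ) : WithBot ℕ) := by
      rw [← natDegree_le_iff_degree_le]
      refine le_trans (natDegree_derivative_le w) ?_
      have : w.natDegree ≤ m + 1 := natDegree_le_iff_degree_le.mpr hwnd
      omega
    have hAdeg' : A.degree = ((m+1 : ℕ) : WithBot ℕ) := by
      rw [degree_eq_natDegree hA_ne, hAdeg]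
    have hGdeg : (derivative w * A - w * B).degree ≤ ((2*m+1 : ℕ) : WithBot ℕ) := by
      refine le_trans (degree_sub_le _ _) (max_le ?_ ?_)
      · refine le_trans (degree_mul_le _ _) ?_
        refine le_trans (add_le_add hw'deg hAdeg'.le) ?_
        rw [← Nat.cast_add, Nat.cast_le]; omega
      · refine le_trans (degree_mul_le _ _) ?_
        refine le_trans (add_le_add hwnd hBdeg) ?_
        rw [← Nat.cast_add, Nat.cast_le]; omega
    have hψdeg : ψ.degree ≤ ((2*m : ℕ) : WithBot ℕ) := by
      by_cases hψ0 : ψ = 0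
      · simp [hψ0]
      have h4 : (derivative w * A - w * B).natDegree = 1 + ψ.natDegree := by
        rw [hψ, natDegree_mul (X_sub_C_ne_zero lamk) hψ0, natDegree_X_sub_C]
      have h5 : (derivative w * A - w * B).natDegree ≤ 2*m+1 :=
        natDegree_le_iff_degree_le.mpr hGdeg
      rw [← natDegree_le_iff_degree_le]
      omega
    have hu₁deg : u₁.degree < ((m+1 : ℕ) : WithBot ℕ) := by
      by_cases hu0 : u₁ = 0
      · rw [hu0, degree_zero]; exact WithBot.bot_lt_coe _
      have hAu : A * u₁ = ψ + B * v₁ := by linear_combination hsol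
      have hv₁deg' : v₁.degree ≤ ((m : ℕ) : WithBot ℕ) := (wb_lt_succ _ _).mp hv₁deg
      have h6 : (A * u₁).degree ≤ ((2*m : ℕ) : WithBot ℕ) := by
        rw [hAu]
        refine le_trans (degree_add_le _ _) (max_le hψdeg ?_)
        refine le_trans (degree_mul_le _ _) ?_
        refine le_trans (add_le_add hBdeg hv₁deg') ?_
        rw [← Nat.cast_add, Nat.cast_le]; omega
      have h7 : (A * u₁).natDegree = (m+1) + u₁.natDegree := by
        rw [natDegree_mul hA_ne hu0, hAdeg]
      have h8 : (A * u₁).natDegree ≤ 2*m := natDegree_le_iff_degree_le.mpr h6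
      rw [← natDegree_lt_iff_degree_lt hu0]
      omega
    obtain ⟨U₁, hU₁m, hU₁d⟩ := mem_lifts_and_degree_eq
      ((mem_lifts u₁).mpr ((Polynomial.map_surjective π (pi_surj p)) u₁))
    obtain ⟨V₁, hV₁m, hV₁d⟩ := mem_lifts_and_degree_eq
      ((mem_lifts v₁).mpr ((Polynomial.map_surjective π (pi_surj p)) v₁))
    refine ⟨(C 2 * Φt + (X - C lamR) * derivative Φt) + C (p : ZMod (p^2)) * U₁,
      (X - C lamR) * Φt + C (p : ZMod (p^2)) * V₁, ?_, ?_, ?_, ?_, ?_⟩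
    · -- the congruence
      have hEmap0 : ((X - C lamR) * ((X - C lamR) * Φt) * U₁
          + W * (C 2 * Φt + (X - C lamR) * derivative Φt)
          - (X - C lamR) * (C 2 * Φt + (X - C lamR) * derivative Φt) * V₁
          - derivative W * ((X - C lamR) * Φt)).map π = 0 := by
        simp only [Polynomial.map_sub, Polynomial.map_add, Polynomial.map_mul, map_C, map_X,
          hΦt_map, ← derivative_map, hmap2, hU₁m, hV₁m, ← hw, ← hlamk]
        rw [hA, hB] at hsol
        rw [hA, hB] at hψ
        linear_combination (X - C lamk) * hsol - hψ
      have hCE := (pC_mul_eq_zero_iff p _).mpr hEmap0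
      rw [hq'_dec, hq_dec']
      linear_combination hCE + (W * U₁ - derivative W * V₁) * hCC
    · -- u nonzero mod p
      have hUmap : ((C 2 * Φt + (X - C lamR) * derivative Φt)
          + C (p : ZMod (p^2)) * U₁).map π = B := by
        rw [Polynomial.map_add, hBtmap, Polynomial.map_mul, map_C, pi_p, C_0, zero_mul,
          add_zero]
      rw [hUmap]
      exact hB_ne
    · -- v nonzero mod p
      have hVmap : ((X - C lamR) * Φt + C (p : ZMod (p^2)) * V₁).map π = A := by
        rw [Polynomial.map_add, hAtmap, Polynomial.map_mul, map_C, pi_p, C_0, zero_mul,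
          add_zero]
      rw [hVmap]
      exact hA_ne
    · -- degree of u
      refine lt_of_le_of_lt (degree_add_le _ _) (max_lt ?_ ?_)
      · exact lt_of_le_of_lt hBtdeg (Nat.cast_lt.mpr (by omega))
      · refine lt_of_le_of_lt (degree_mul_le _ _) ?_
        refine lt_of_le_of_lt (add_le_add degree_C_le le_rfl) ?_
        rw [zero_add, hU₁d]
        exact hu₁deg
    · -- degree of v
      refine lt_of_le_of_lt (degree_add_le _ _) (max_lt ?_ ?_)
      · rw [degree_eq_natDegree hAt_monic.ne_zero, hAtdeg]
        exact Nat.cast_lt.mpr (by omega)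
      · refine lt_of_le_of_lt (degree_mul_le _ _) ?_
        refine lt_of_le_of_lt (add_le_add degree_C_le le_rfl) ?_
        rw [zero_add, hV₁d]
        exact lt_of_lt_of_le hv₁deg (Nat.cast_le.mpr (by omega))

end Core

/-- Let `M` be an `n×n` symmetric integer matrix and `p` an odd prime
with `χ(M;x) ≡ (x - λ₀)² φ(x) (mod p)`, `φ` squarefree over `𝔽_p` and
`φ(λ₀) ≢ 0 (mod p)`. Then the congruence `χ(M;x)·u(x) ≡ χ'(M;x)·v(x) (mod p²)` has a
solution `(u, v)` with `u, v ≢ 0 (mod p)`, `deg u < n - 1` and `deg v < n`, if and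
only if `p² ∣ det(M - λ₀I)`. -/
theorem congruence_solvable_iff_sq_dvd_det (n : ℕ) (M : Matrix (Fin n) (Fin n) ℤ)
    (hM : M.IsSymm) (p : ℕ) (hp : p.Prime) (hodd : Odd p)
    (lam : ℤ) (φ : Polynomial ℤ)
    (hfact : M.charpoly.map (Int.castRingHom (ZMod p)) =
      (X - C ((lam : ZMod p))) ^ 2 * φ.map (Int.castRingHom (ZMod p)))
    (hsf : Squarefree (φ.map (Int.castRingHom (ZMod p))))
    (hlam : ¬ (p : ℤ) ∣ φ.eval lam) :
    (∃ u v : Polynomial ℤ,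
      (M.charpoly * u).map (Int.castRingHom (ZMod (p ^ 2))) =
        (Polynomial.derivative M.charpoly * v).map (Int.castRingHom (ZMod (p ^ 2))) ∧
      u.map (Int.castRingHom (ZMod p)) ≠ 0 ∧
      v.map (Int.castRingHom (ZMod p)) ≠ 0 ∧
      u.degree < ((n - 1 : ℕ) : WithBot ℕ) ∧
      v.degree < ((n : ℕ) : WithBot ℕ)) ↔
    (p : ℤ) ^ 2 ∣ (M - (lam : ℤ) • (1 : Matrix (Fin n) (Fin n) ℤ)).det := by
  haveI : Fact p.Prime := ⟨hp⟩
  haveI : Fact (1 < p^2) := ⟨by nlinarith [hp.two_le]⟩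
  set ι1 := Int.castRingHom (ZMod p) with hι1
  set ι2 := Int.castRingHom (ZMod (p^2)) with hι2
  have hcompose : (pih p).comp ι2 = ι1 := by
    apply RingHom.ext_int
  have hmap : ∀ f : Polynomial ℤ, f.map ι1 = (f.map ι2).map (pih p) := by
    intro f
    rw [Polynomial.map_map, hcompose]
  set q := M.charpoly.map ι2 with hq
  have hq_monic : q.Monic := (Matrix.charpoly_monic M).map ι2
  have hqdeg : q.natDegree = n := by
    rw [hq, (Matrix.charpoly_monic M).natDegree_map, Matrix.charpoly_natDegree_eq_dim,
      Fintype.card_fin]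
  have hπlam : pih p ((lam : ZMod (p^2))) = (lam : ZMod p) := map_intCast _ lam
  set Φk := φ.map ι1 with hΦk
  have hΦeval : Φk.eval ((lam : ZMod p)) ≠ 0 := by
    rw [hΦk, hι1, eval_intCast_map]
    simp only [eq_intCast, Int.cast_id]
    rw [Ne, ZMod.intCast_zmod_eq_zero_iff_dvd]
    exact_mod_cast hlam
  have hΦk_ne : Φk ≠ 0 := fun h => hΦeval (by simp [h])
  have hnm : n = Φk.natDegree + 2 := by
    have h1 : (M.charpoly.map ι1).natDegree = n := by
      rw [(Matrix.charpoly_monic M).natDegree_map, Matrix.charpoly_natDegree_eq_dim,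
        Fintype.card_fin]
    rw [hfact] at h1
    rw [natDegree_mul (pow_ne_zero 2 (X_sub_C_ne_zero _)) hΦk_ne] at h1
    rw [natDegree_pow, natDegree_X_sub_C] at h1
    omega
  set m := Φk.natDegree with hm
  have hfac' : q.map (pih p) = (X - C (pih p ((lam : ZMod (p^2)))))^2 * Φk := by
    rw [← hmap, hfact, hπlam]
  have hcore := core p m hodd q hq_monic (by omega) ((lam : ZMod (p^2))) Φk hfac' hsf
    (by rw [hπlam]; exact hΦeval)
  have hn1 : (n - 1 : ℕ) = m + 1 := by omega
  rw [hn1]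
  have hiff1 : (∃ u v : Polynomial ℤ,
      (M.charpoly * u).map ι2 = (Polynomial.derivative M.charpoly * v).map ι2 ∧
      u.map ι1 ≠ 0 ∧ v.map ι1 ≠ 0 ∧
      u.degree < ((m + 1 : ℕ) : WithBot ℕ) ∧ v.degree < ((n : ℕ) : WithBot ℕ)) ↔
      (∃ U V : Polynomial (ZMod (p^2)), q * U = derivative q * V ∧
        U.map (pih p) ≠ 0 ∧ V.map (pih p) ≠ 0 ∧
        U.degree < ((m+1 : ℕ) : WithBot ℕ) ∧ V.degree < ((m+2 : ℕ) : WithBot ℕ)) := by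
    constructor
    · rintro ⟨u, v, heq, hu, hv, hud, hvd⟩
      refine ⟨u.map ι2, v.map ι2, ?_, ?_, ?_, ?_, ?_⟩
      · rw [hq, ← Polynomial.map_mul, heq, Polynomial.map_mul, derivative_map]
      · rw [← hmap]; exact hu
      · rw [← hmap]; exact hv
      · exact lt_of_le_of_lt degree_map_le hud
      · refine lt_of_le_of_lt degree_map_le ?_
        rw [← (by omega : n = m + 2)]
        exact hvd
    · rintro ⟨U, V, heq, hU, hV, hUd, hVd⟩
      obtain ⟨u, hu_map, hu_deg⟩ := mem_lifts_and_degree_eq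
        ((mem_lifts U).mpr ((Polynomial.map_surjective ι2 ZMod.intCast_surjective) U))
      obtain ⟨v, hv_map, hv_deg⟩ := mem_lifts_and_degree_eq
        ((mem_lifts V).mpr ((Polynomial.map_surjective ι2 ZMod.intCast_surjective) V))
      refine ⟨u, v, ?_, ?_, ?_, ?_, ?_⟩
      · rw [Polynomial.map_mul, Polynomial.map_mul, hu_map, hv_map, ← derivative_map,
          ← hq, heq]
      · rw [hmap, hu_map]; exact hU
      · rw [hmap, hv_map]; exact hV
      · rw [hu_deg]; exact hUd
      · rw [hv_deg, (by omega : n = m + 2)]; exact hVd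
  rw [hiff1, hcore]
  -- now the determinant side
  have hev : q.eval ((lam : ZMod (p^2))) = ((M.charpoly.eval lam : ℤ) : ZMod (p^2)) := by
    rw [hq, hι2, eval_intCast_map]
    rfl
  have hdet : (M - (lam : ℤ) • (1 : Matrix (Fin n) (Fin n) ℤ)).det
      = (-1)^n * M.charpoly.eval lam := by
    rw [charpoly_eval_eq]
    rw [show M - (lam : ℤ) • (1 : Matrix (Fin n) (Fin n) ℤ)
        = -((lam : ℤ) • (1 : Matrix (Fin n) (Fin n) ℤ) - M) from (neg_sub _ _).symm]
    rw [Matrix.det_neg, Fintype.card_fin]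
  rw [hev, hdet]
  rw [ZMod.intCast_zmod_eq_zero_iff_dvd]
  have hcast : ((p^2 : ℕ) : ℤ) = (p : ℤ)^2 := by push_cast; ring
  rw [hcast]
  rcases Nat.even_or_odd n with he | ho
  · rw [he.neg_one_pow, one_mul]
  · rw [ho.neg_one_pow, neg_one_mul, dvd_neg]
end

section
/- Let f(x) be a monic polynomial with integer coefficients. Then the discriminant Δ(f) is not congruent to 2 modulo 4. -/
open Polynomial Matrix

open MvPolynomial Equiv Finset

/-- Sum, over permutations of a given sign, of the Vandermonde monomials. -/
noncomputable def permHalf (n : ℕ) (e : ℤˣ) : MvPolynomial (Fin n) ℤ :=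
  ∑ σ ∈ Finset.univ.filter (fun σ : Perm (Fin n) => Perm.sign σ = e),
    ∏ i, MvPolynomial.X (σ i) ^ (i : ℕ)

lemma rename_permHalf (n : ℕ) (τ : Perm (Fin n)) (e : ℤˣ) :
    rename τ (permHalf n e) = permHalf n (Perm.sign τ * e) := by
  unfold permHalf
  rw [map_sum]
  refine Finset.sum_nbij' (fun σ => τ * σ) (fun σ => τ⁻¹ * σ) ?_ ?_ ?_ ?_ ?_
  · intro σ hσ
    simp only [Finset.mem_filter, Finset.mem_univ, true_and] at *
    rw [_root_.map_mul, hσ]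
  · intro σ hσ
    simp only [Finset.mem_filter, Finset.mem_univ, true_and] at *
    rw [_root_.map_mul, hσ, _root_.map_inv, ← mul_assoc, inv_mul_cancel, one_mul]
  · intro σ _; simp [← mul_assoc]
  · intro σ _; simp [← mul_assoc]
  · intro σ _
    rw [map_prod]
    refine Finset.prod_congr rfl fun i _ => ?_
    rw [map_pow, rename_X, Perm.mul_apply]

lemma isSymmetric_permHalf_add (n : ℕ) :
    (permHalf n 1 + permHalf n (-1)).IsSymmetric := by
  intro τ
  rw [map_add, rename_permHalf, rename_permHalf]
  rcases Int.units_eq_one_or (Perm.sign τ) with h | h <;> rw [h] <;> simp [add_comm]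

lemma isSymmetric_permHalf_mul (n : ℕ) :
    (permHalf n 1 * permHalf n (-1)).IsSymmetric := by
  intro τ
  rw [_root_.map_mul, rename_permHalf, rename_permHalf]
  rcases Int.units_eq_one_or (Perm.sign τ) with h | h <;> rw [h] <;> simp [mul_comm]

lemma aeval_symm_int {n : ℕ} (v : Fin n → ℂ) (c : Fin n → ℤ)
    (hc : ∀ i : Fin n, (MvPolynomial.aeval v) (esymm (Fin n) ℤ ((i : ℕ) + 1)) = ((c i : ℤ) : ℂ))
    (p : MvPolynomial (Fin n) ℤ) (hp : p.IsSymmetric) :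
    ∃ a : ℤ, (MvPolynomial.aeval v) p = (a : ℂ) := by
  obtain ⟨q, hq⟩ := esymmAlgHom_surjective (σ := Fin n) ℤ (n := n) (by simp) ⟨p, hp⟩
  refine ⟨MvPolynomial.aeval c q, ?_⟩
  have h1 : p = aeval (fun i : Fin n => esymm (Fin n) ℤ ((i : ℕ) + 1)) q := by
    rw [← esymmAlgHom_apply, hq]
  rw [h1, ← AlgHom.comp_apply, comp_aeval]
  simp_rw [hc]
  have h2 := comp_aeval (R := ℤ) (f := c) (Algebra.ofId ℤ ℂ)
  have h3 : (fun i => ((c i : ℤ) : ℂ)) = (Algebra.ofId ℤ ℂ) ∘ c := by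
    funext i; simp [Algebra.ofId_apply, algebraMap_int_eq, eq_intCast]
  rw [h3, show (⇑(Algebra.ofId ℤ ℂ) ∘ c) = fun i => (Algebra.ofId ℤ ℂ) (c i) from rfl,
    ← h2, AlgHom.comp_apply]
  simp [Algebra.ofId_apply, algebraMap_int_eq, eq_intCast]

lemma aeval_permHalf {n : ℕ} (v : Fin n → ℂ) (e : ℤˣ) :
    (MvPolynomial.aeval v) (permHalf n e)
      = ∑ σ ∈ Finset.univ.filter (fun σ : Perm (Fin n) => Perm.sign σ = e),
          ∏ i, v (σ i) ^ (i : ℕ) := by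
  unfold permHalf
  rw [map_sum]
  refine Finset.sum_congr rfl fun σ _ => ?_
  rw [map_prod]; simp

lemma det_vandermonde_eq_permHalf {n : ℕ} (v : Fin n → ℂ) :
    det (vandermonde v) =
      (MvPolynomial.aeval v) (permHalf n 1) - (MvPolynomial.aeval v) (permHalf n (-1)) := by
  rw [det_apply, aeval_permHalf, aeval_permHalf,
    ← Finset.sum_filter_add_sum_filter_not Finset.univ
      (fun σ : Perm (Fin n) => Perm.sign σ = 1)]
  have h2 : Finset.univ.filter (fun σ : Perm (Fin n) => ¬ Perm.sign σ = 1)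
      = Finset.univ.filter (fun σ : Perm (Fin n) => Perm.sign σ = -1) := by
    refine Finset.filter_congr fun σ _ => ?_
    rcases Int.units_eq_one_or (Perm.sign σ) with h | h <;> simp [h]
  rw [h2]
  have h3 : ∀ e : ℤˣ, ∀ σ ∈ Finset.univ.filter (fun σ : Perm (Fin n) => Perm.sign σ = e),
      Perm.sign σ • ∏ i, vandermonde v (σ i) i = (e : ℤ) • ∏ i, v (σ i) ^ (i : ℕ) := by
    intro e σ hσ
    rw [Finset.mem_filter] at hσ
    rw [hσ.2]
    simp [vandermonde_apply, Units.smul_def]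
  rw [Finset.sum_congr rfl (h3 1), Finset.sum_congr rfl (h3 (-1))]
  simp [sub_eq_add_neg, ← Finset.sum_neg_distrib]

lemma det_vandermonde_sq_int {n : ℕ} (v : Fin n → ℂ) (c : Fin n → ℤ)
    (hc : ∀ i : Fin n, (MvPolynomial.aeval v) (esymm (Fin n) ℤ ((i : ℕ) + 1)) = ((c i : ℤ) : ℂ)) :
    ∃ a b : ℤ, det (vandermonde v) ^ 2 = ((a ^ 2 - 4 * b : ℤ) : ℂ) := by
  obtain ⟨a, ha⟩ := aeval_symm_int v c hc _ (isSymmetric_permHalf_add n)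
  obtain ⟨b, hb⟩ := aeval_symm_int v c hc _ (isSymmetric_permHalf_mul n)
  refine ⟨a, b, ?_⟩
  rw [det_vandermonde_eq_permHalf]
  rw [map_add] at ha
  rw [_root_.map_mul] at hb
  push_cast
  rw [← ha, ← hb]
  ring

/-- The discriminant of a monic integer polynomial is never
congruent to `2` modulo `4`. -/
theorem disc_not_two_mod_four (f : Polynomial ℤ) (hf : f.Monic)
    (D : ℤ) (hD : polyDisc f = (D : ℂ)) :
    ¬ D ≡ 2 [ZMOD 4] := by
  set g := f.map (Int.castRingHom ℂ) with hg
  have hmonic : g.Monic := hf.map _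
  have hsplits : g.Splits := IsAlgClosed.splits g
  have hcard : Multiset.card g.roots = g.natDegree := (splits_iff_card_roots).1 hsplits
  set l := g.roots.toList with hl
  set n := l.length with hnl
  have hln : (l : Multiset ℂ) = g.roots := g.roots.coe_toList
  have hn : n = g.natDegree := by
    rw [hnl, hl, Multiset.length_toList, hcard]
  set v : Fin n → ℂ := fun i => l.get i with hv
  -- the elementary symmetric functions of the roots are integers
  set c : Fin n → ℤ := fun i =>
    (-1) ^ ((i : ℕ) + 1) * f.coeff (g.natDegree - ((i : ℕ) + 1)) with hc
  have hesymm : ∀ i : Fin n,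
      (MvPolynomial.aeval v) (esymm (Fin n) ℤ ((i : ℕ) + 1)) = ((c i : ℤ) : ℂ) := by
    intro i
    have hi1 : (i : ℕ) + 1 ≤ g.natDegree := by rw [← hn]; exact i.isLt
    rw [aeval_esymm_eq_multiset_esymm]
    have huniv : (Finset.univ.val.map v) = g.roots := by
      rw [← hln]
      show ((List.finRange n : Multiset (Fin n)).map v) = (l : Multiset ℂ)
      rw [Multiset.map_coe]
      congr 1
      exact List.map_get_finRange l
    rw [huniv]
    have hvieta := Polynomial.coeff_eq_esymm_roots_of_card hcard
      (k := g.natDegree - ((i : ℕ) + 1)) (Nat.sub_le _ _)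
    rw [Nat.sub_sub_self hi1, hmonic.leadingCoeff, one_mul] at hvieta
    have hcoeff : g.coeff (g.natDegree - ((i : ℕ) + 1))
        = ((f.coeff (g.natDegree - ((i : ℕ) + 1)) : ℤ) : ℂ) := by
      rw [hg, Polynomial.coeff_map]; simp
    rw [hcoeff] at hvieta
    have hsol : g.roots.esymm ((i : ℕ) + 1)
        = (-1 : ℂ) ^ ((i : ℕ) + 1) * ((f.coeff (g.natDegree - ((i : ℕ) + 1)) : ℤ) : ℂ) := by
      rw [hvieta, ← mul_assoc, ← pow_add,
        show ((i : ℕ) + 1) + ((i : ℕ) + 1) = 2 * ((i : ℕ) + 1) by ring, pow_mul]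
      norm_num
    rw [hsol, hc]
    push_cast
    ring
  obtain ⟨a, b, hab⟩ := det_vandermonde_sq_int v c hesymm
  -- identify polyDisc with det (vandermonde v) ^ 2
  have hpd : polyDisc f
      = ∏ p ∈ (Finset.range n ×ˢ Finset.range n).filter (fun p => p.1 < p.2),
          (l.getD p.2 0 - l.getD p.1 0) ^ 2 := rfl
  have hsq : polyDisc f
      = (∏ p ∈ (Finset.range n ×ˢ Finset.range n).filter (fun p => p.1 < p.2),
          (l.getD p.2 0 - l.getD p.1 0)) ^ 2 := by
    rw [hpd, Finset.prod_pow]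
  have hdet : ∏ p ∈ (Finset.range n ×ˢ Finset.range n).filter (fun p => p.1 < p.2),
      (l.getD p.2 0 - l.getD p.1 0) = det (vandermonde v) := by
    rw [det_vandermonde, Finset.prod_filter, Finset.prod_product]
    dsimp only
    have h1 : ∀ i : Fin n, ∏ j ∈ Finset.Ioi i, (v j - v i)
        = ∏ j : Fin n, (if (i : ℕ) < (j : ℕ) then l.getD (j : ℕ) 0 - l.getD (i : ℕ) 0 else 1) := by
      intro i
      have hioi : Finset.Ioi i = Finset.univ.filter (fun j => i < j) := by ext j; simp
      rw [hioi, Finset.prod_filter]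
      refine Finset.prod_congr rfl fun j _ => ?_
      simp only [Fin.lt_def]
      split_ifs with h
      · rw [hv]
        simp [List.getD_eq_getElem, List.get_eq_getElem, List.getElem?_eq_getElem j.isLt,
          List.getElem?_eq_getElem i.isLt]
      · rfl
    conv_rhs => rw [Finset.prod_congr rfl fun i (_ : i ∈ Finset.univ) => h1 i]
    refine Eq.symm ?_
    rw [Fin.prod_univ_eq_prod_range
      (fun i => ∏ j : Fin n, (if i < (j : ℕ) then l.getD (j : ℕ) 0 - l.getD i 0 else 1))]
    refine Finset.prod_congr rfl fun i _ => ?_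
    rw [Fin.prod_univ_eq_prod_range
      (fun j => (if i < j then l.getD j 0 - l.getD i 0 else 1))]
  have hfinal : (D : ℂ) = ((a ^ 2 - 4 * b : ℤ) : ℂ) := by
    rw [← hD, hsq, hdet, hab]
  have hDab : D = a ^ 2 - 4 * b := Int.cast_injective hfinal
  intro hmod
  rw [show (4 : ℤ) = ((4 : ℕ) : ℤ) by norm_num] at hmod
  rw [← ZMod.intCast_eq_intCast_iff] at hmod
  rw [hDab] at hmod
  push_cast at hmod
  have : ∀ x y : ZMod 4, x ^ 2 - 4 * y ≠ 2 := by decide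
  exact this _ _ hmod
end

section
/- Let n ≥ 1, set δ = 0 if n is even and δ = 1 if n is odd, let B be a ⌊n/2⌋ × ⌈n/2⌉ matrix (over a commutative ring, e.g. ℤ), and let A be the n×n block matrix A = [[0, B],[Bᵀ, 0]]. Then χ(A;x) = x^δ · χ(BBᵀ; x²) and x^δ · χ(A;x) = χ(BᵀB; x²), where for a square matrix M, χ(M;x) = det(xI − M). -/
/-!
For `A = [[0, B], [C, 0]]` with `B` of size `k × l` and `C` of size `l × k`, multiplying the
characteristic matrix `[[X, -B], [-C, X]]` on the right by `[[X, 0], [C, X]]` gives the block upper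
triangular matrix `[[X² - BC, -XB], [0, X²]]`, so `X^(k+l) χ(A) = X^(2l) χ(BC)(X²)`; swapping the
two blocks gives the companion identity with `CB`. Cancelling the regular element `X^l`, and taking
`k = ⌊n/2⌋`, `l = ⌈n/2⌉ = ⌊n/2⌋ + δ`, yields both formulas.
-/

open Polynomial Matrix

namespace Matrix

variable {R : Type*} [CommRing R] {m n : Type*} [Fintype m] [Fintype n] [DecidableEq m]
  [DecidableEq n]

theorem charpoly_comp_eq_det (M : Matrix n n R) (p : R[X]) :
    M.charpoly.comp p = (scalar n p - M.map C).det := by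
  have hmap : (charmatrix M).map (eval₂RingHom C p) = scalar n p - M.map C := by
    ext i j
    by_cases h : i = j
    · subst h; simp
    · simp [h]
  rw [Polynomial.comp, charpoly, ← coe_eval₂RingHom, RingHom.map_det, RingHom.mapMatrix_apply,
    hmap]

theorem X_pow_mul_charpoly_fromBlocks_zero_zero (A : Matrix m n R) (B : Matrix n m R) :
    X ^ Fintype.card m * (fromBlocks 0 A B 0).charpoly =
      X ^ Fintype.card n * (A * B).charpoly.comp (X ^ 2) := by
  have hmul : charmatrix (fromBlocks 0 A B 0) *
      fromBlocks (scalar m X) 0 (B.map C) (scalar n (X : R[X])) =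
      fromBlocks (scalar m (X ^ 2) - (A * B).map C) (-((X : R[X]) • A.map C)) 0
        (scalar n (X ^ 2)) := by
    rw [charmatrix_fromBlocks, charmatrix_zero, fromBlocks_multiply]
    simp [scalar_apply, ← smul_eq_diagonal_mul, ← smul_eq_mul_diagonal, ← diagonal_smul,
      Matrix.map_mul, sq, sub_eq_add_neg]
  have hdet := congrArg det hmul
  rw [det_mul, det_fromBlocks_zero₁₂, det_fromBlocks_zero₂₁, ← charpoly_comp_eq_det,
    ← charpoly] at hdet
  simp only [scalar_apply, det_diagonal, Finset.prod_const, Finset.card_univ] at hdet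
  refine (isRegular_X_pow (Fintype.card n)).left ?_
  linear_combination hdet

theorem X_pow_mul_charpoly_fromBlocks_zero_zero' (A : Matrix m n R) (B : Matrix n m R) :
    X ^ Fintype.card n * (fromBlocks 0 A B 0).charpoly =
      X ^ Fintype.card m * (B * A).charpoly.comp (X ^ 2) := by
  have hswap : reindex (Equiv.sumComm m n) (Equiv.sumComm m n) (fromBlocks 0 A B 0) =
      fromBlocks 0 B A 0 :=
    fromBlocks_submatrix_sum_swap_sum_swap _ _ _ _
  rw [← charpoly_reindex (Equiv.sumComm m n), hswap, X_pow_mul_charpoly_fromBlocks_zero_zero]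

end Matrix

theorem charpoly_fromBlocks_bipartite_general {R : Type*} [CommRing R] (n : ℕ)
    (B : Matrix (Fin (n / 2)) (Fin ((n + 1) / 2)) R) :
    (Matrix.fromBlocks 0 B Bᵀ 0).charpoly =
      X ^ (n % 2) * ((B * Bᵀ).charpoly.comp (X ^ 2)) ∧
    X ^ (n % 2) * (Matrix.fromBlocks 0 B Bᵀ 0).charpoly =
      (Bᵀ * B).charpoly.comp (X ^ 2) := by
  have hcard : (n + 1) / 2 = n / 2 + n % 2 := by omega
  have hAB := X_pow_mul_charpoly_fromBlocks_zero_zero B Bᵀ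
  have hBA := X_pow_mul_charpoly_fromBlocks_zero_zero' B Bᵀ
  simp only [Fintype.card_fin, hcard, pow_add, mul_assoc] at hAB hBA
  exact ⟨(isRegular_X_pow _).left hAB, (isRegular_X_pow _).left hBA⟩

/-- Let `n ≥ 1`, `δ = 0` if `n` is even and `δ = 1` if `n` is odd,
let `B` be a `⌊n/2⌋ × ⌈n/2⌉` matrix over a commutative ring and
`A = [[0, B], [Bᵀ, 0]]`. Then `χ(A;x) = x^δ · χ(BBᵀ;x²)` and
`x^δ · χ(A;x) = χ(BᵀB;x²)`. -/
theorem charpoly_fromBlocks_bipartite {R : Type*} [CommRing R] (n : ℕ) (hn : 1 ≤ n)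
    (B : Matrix (Fin (n / 2)) (Fin ((n + 1) / 2)) R) :
    (Matrix.fromBlocks 0 B Bᵀ 0).charpoly =
      X ^ (n % 2) * ((B * Bᵀ).charpoly.comp (X ^ 2)) ∧
    X ^ (n % 2) * (Matrix.fromBlocks 0 B Bᵀ 0).charpoly =
      (Bᵀ * B).charpoly.comp (X ^ 2) :=
  charpoly_fromBlocks_bipartite_general n B
end

section
/- Let n ≥ 2, set δ = 0 if n is even and δ = 1 if n is odd, let B be a ⌊n/2⌋ × ⌈n/2⌉ integer matrix, and let A = [[0, B],[Bᵀ, 0]]. Suppose the coefficient of x^δ in χ(A;x) equals 1 or −1. Then Δ_A = 4^{⌊n/2⌋} · (Δ_{BBᵀ})², and consequently 2^{−⌊n/2⌋}·√Δ_A = Δ_{BBᵀ}. -/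
open Polynomial Matrix


section LP
variable {K : Type*} [CommRing K]

/-- product of squared differences over index pairs of a list -/
noncomputable def LP (l : List K) : K :=
  ∏ p ∈ (Finset.range l.length ×ˢ Finset.range l.length).filter fun p => p.1 < p.2,
    (l.getD p.2 0 - l.getD p.1 0) ^ 2

lemma prod_range_getD (f : K → K) (l : List K) :
    ∏ k ∈ Finset.range l.length, f (l.getD k 0) = (l.map f).prod := by
  induction l with
  | nil => simp
  | cons a l ih =>
      rw [List.length_cons, Finset.prod_range_succ']
      simp only [List.getD_cons_succ, List.getD_cons_zero, ih, List.map_cons, List.prod_cons]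
      ring

lemma LP_eq (l : List K) :
    LP l = ∏ i ∈ Finset.range l.length, ∏ j ∈ Finset.Ico (i+1) l.length,
      (l.getD j 0 - l.getD i 0) ^ 2 := by
  rw [LP, Finset.prod_filter, Finset.prod_product]
  refine Finset.prod_congr rfl fun i _ => ?_
  rw [← Finset.prod_filter]
  refine Finset.prod_congr ?_ fun j _ => rfl
  ext j
  simp only [Finset.mem_filter, Finset.mem_range, Finset.mem_Ico]
  omega

lemma LP_nil : LP ([] : List K) = 1 := by simp [LP]

lemma LP_cons (a : K) (l : List K) :
    LP (a :: l) = (l.map fun t => (t - a) ^ 2).prod * LP l := by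
  rw [LP_eq, LP_eq, List.length_cons, Finset.prod_range_succ', mul_comm]
  congr 1
  · rw [Finset.prod_Ico_eq_prod_range]
    simp only [Nat.add_sub_cancel, List.getD_cons_zero]
    rw [← prod_range_getD (fun t => (t - a) ^ 2) l]
    refine Finset.prod_congr rfl fun k _ => ?_
    rw [show 0 + 1 + k = k + 1 from by omega, List.getD_cons_succ]
  · refine Finset.prod_congr rfl fun i _ => ?_
    rw [Finset.prod_Ico_eq_prod_range, Finset.prod_Ico_eq_prod_range]
    have h : l.length + 1 - (i + 1 + 1) = l.length - (i + 1) := by omega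
    rw [h]
    refine Finset.prod_congr rfl fun k _ => ?_
    rw [show i + 1 + 1 + k = (i + 1 + k) + 1 from by omega, List.getD_cons_succ,
      List.getD_cons_succ]

lemma LP_perm {l₁ l₂ : List K} (h : l₁.Perm l₂) : LP l₁ = LP l₂ := by
  induction h with
  | nil => rfl
  | cons a h ih => rw [LP_cons, LP_cons, ih, (h.map _).prod_eq]
  | swap a b l =>
      rw [LP_cons, LP_cons, LP_cons, LP_cons]
      simp only [List.map_cons, List.prod_cons]
      ring
  | trans _ _ ih₁ ih₂ => exact ih₁.trans ih₂

/-- product of squared differences over a multiset -/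
noncomputable def MD (s : Multiset K) : K := LP s.toList

lemma MD_coe (l : List K) : MD (l : Multiset K) = LP l :=
  LP_perm (Multiset.coe_eq_coe.mp (by simp))

lemma MD_zero : MD (0 : Multiset K) = 1 := by
  simpa [LP_nil] using MD_coe ([] : List K)

lemma MD_cons (a : K) (s : Multiset K) :
    MD (a ::ₘ s) = (s.map fun t => (t - a) ^ 2).prod * MD s := by
  obtain ⟨l, rfl⟩ := s.exists_rep
  simp only [Multiset.quot_mk_to_coe]
  rw [show a ::ₘ (l : Multiset K) = ((a :: l : List K) : Multiset K) from rfl, MD_coe, MD_coe,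
    LP_cons]
  simp

lemma getD_map0 {L : Type*} [CommRing L] (f : K →+* L) (l : List K) (i : ℕ) :
    (l.map f).getD i 0 = f (l.getD i 0) := by
  rcases lt_or_ge i l.length with h | h
  · rw [List.getD_eq_getElem _ _ (by simpa using h), List.getD_eq_getElem _ _ h,
      List.getElem_map]
  · rw [List.getD_eq_default _ _ (by simpa using h), List.getD_eq_default _ _ h, map_zero]

lemma MD_map {L : Type*} [CommRing L] (f : K →+* L) (s : Multiset K) :
    MD (s.map f) = f (MD s) := by
  obtain ⟨l, rfl⟩ := s.exists_rep
  simp only [Multiset.quot_mk_to_coe]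
  rw [Multiset.map_coe, MD_coe, MD_coe]
  unfold LP
  rw [map_prod]
  rw [List.length_map]
  refine Finset.prod_congr rfl fun p hp => ?_
  simp only [Finset.mem_filter, Finset.mem_product, Finset.mem_range] at hp
  rw [map_pow, map_sub]
  rw [getD_map0, getD_map0]

lemma LP_ofFn : ∀ {N : ℕ} (v : Fin N → K),
    LP (List.ofFn v) = ∏ i, ∏ j ∈ Finset.Ioi i, (v j - v i) ^ 2 := by
  intro N
  induction N with
  | zero => intro v; simp [LP_nil]
  | succ N ih =>
      intro v
      rw [List.ofFn_succ, LP_cons, ih, Fin.prod_univ_succ]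
      congr 1
      · rw [Fin.prod_Ioi_zero, List.map_ofFn, List.prod_ofFn]
        rfl
      · refine Finset.prod_congr rfl fun i _ => ?_
        rw [Fin.prod_Ioi_succ]

lemma MD_univ_map {N : ℕ} (v : Fin N → K) :
    MD (Finset.univ.val.map v) = ∏ i, ∏ j ∈ Finset.Ioi i, (v j - v i) ^ 2 := by
  rw [← LP_ofFn v, ← MD_coe]
  congr 1
  rw [List.ofFn_eq_map]
  simp [Fin.univ_def, Finset.range_val]

lemma prod_map_sq (s : Multiset K) : (s.map fun x => x ^ 2).prod = s.prod ^ 2 := by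
  have := Multiset.prod_map_pow (m := s) (f := id) (n := 2)
  simpa using this

lemma MD_bind (c : K → K) (R : Multiset K) (h : ∀ μ ∈ R, c μ ^ 2 = μ) :
    MD (R.bind fun μ => {c μ, -c μ}) = 4 ^ Multiset.card R * R.prod * MD R ^ 2 := by
  induction R using Multiset.induction with
  | empty => simp [MD_zero]
  | cons a R ih =>
      have ha : c a ^ 2 = a := h a (Multiset.mem_cons_self a R)
      have hR : ∀ μ ∈ R, c μ ^ 2 = μ := fun μ hμ => h μ (Multiset.mem_cons_of_mem hμ)
      rw [Multiset.cons_bind, Multiset.insert_eq_cons, Multiset.cons_add,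
        Multiset.singleton_add, MD_cons, MD_cons, ih hR]
      rw [Multiset.map_cons, Multiset.prod_cons]
      -- now massage
      have key : ((R.bind fun μ => {c μ, -c μ}).map fun t => (t - c a) ^ 2).prod *
          ((R.bind fun μ => {c μ, -c μ}).map fun t => (t - -c a) ^ 2).prod
          = (R.map fun μ => ((μ - a) ^ 2) ^ 2).prod := by
        rw [← Multiset.prod_map_mul]
        rw [Multiset.map_bind, Multiset.prod_bind]
        refine congrArg Multiset.prod (Multiset.map_congr rfl fun μ hμ => ?_)
        have hμ2 : c μ ^ 2 = μ := hR μ hμ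
        simp only [Multiset.insert_eq_cons, Multiset.map_cons, Multiset.map_singleton,
          Multiset.prod_cons, Multiset.prod_singleton]
        have : ∀ t : K, (t - c a) ^ 2 * (t - -c a) ^ 2 = (t ^ 2 - c a ^ 2) ^ 2 := by
          intro t; ring
        rw [this, this, ha, hμ2]
        have h2 : (-c μ) ^ 2 = μ := by rw [neg_sq, hμ2]
        rw [h2]
        ring
      have expand : (-c a - c a) ^ 2 = 4 * a := by
        have h4 : (-c a - c a) ^ 2 = 4 * c a ^ 2 := by ring
        rw [h4, ha]
      rw [expand, MD_cons, Multiset.card_cons, Multiset.prod_cons]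
      have sq : (R.map fun μ => ((μ - a) ^ 2) ^ 2).prod
          = ((R.map fun t => (t - a) ^ 2).prod) ^ 2 := by
        rw [← prod_map_sq (R.map fun t => (t - a) ^ 2), Multiset.map_map]
        rfl
      linear_combination (4 * a * (4 ^ Multiset.card R * R.prod * MD R ^ 2)) * key +
        (4 * a * (4 ^ Multiset.card R * R.prod * MD R ^ 2)) * sq

lemma MD_bind_zero (c : K → K) (R : Multiset K) (h : ∀ μ ∈ R, c μ ^ 2 = μ) :
    MD ((0:K) ::ₘ R.bind fun μ => {c μ, -c μ}) =
      R.prod ^ 2 * (4 ^ Multiset.card R * R.prod * MD R ^ 2) := by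
  rw [MD_cons, MD_bind c R h]
  congr 1
  rw [Multiset.map_bind, Multiset.prod_bind]
  rw [← prod_map_sq R]
  refine congrArg Multiset.prod (Multiset.map_congr rfl fun μ hμ => ?_)
  have hμ2 : c μ ^ 2 = μ := h μ hμ
  simp only [Multiset.insert_eq_cons, Multiset.map_cons, Multiset.map_singleton,
    Multiset.prod_cons, Multiset.prod_singleton]
  rw [sub_zero, sub_zero, hμ2, neg_sq, hμ2]
  ring

end LP

lemma charpoly_blocks_mul (m k : ℕ) (B : Matrix (Fin m) (Fin k) ℤ) :
    (fromBlocks 0 B Bᵀ 0).charpoly * (X ^ m * X ^ k) =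
      (B * Bᵀ).charpoly.comp (X ^ 2) * (X ^ 2) ^ k := by
  classical
  set A : Matrix (Fin m ⊕ Fin k) (Fin m ⊕ Fin k) ℤ := fromBlocks 0 B Bᵀ 0 with hA
  set Cm : ℤ →+* ℤ[X] := (C : ℤ →+* ℤ[X])
  set N : Matrix (Fin m ⊕ Fin k) (Fin m ⊕ Fin k) ℤ[X] :=
    fromBlocks (Matrix.scalar (Fin m) X) (B.map C) 0 (Matrix.scalar (Fin k) X) with hN
  have hcomm : ∀ {ι κ : Type} [Fintype ι] [Fintype κ] [DecidableEq ι] (M : Matrix ι ι ℤ[X]),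
      Matrix.scalar ι X * M = M * Matrix.scalar ι X := by
    intro ι κ _ _ _ M
    exact (Matrix.scalar_commute X (fun r' => Commute.all X r') M).eq
  have hchm : charmatrix A =
      fromBlocks (Matrix.scalar (Fin m) X) (-(B.map C)) (-(Bᵀ.map C))
        (Matrix.scalar (Fin k) X) := by
    rw [hA, charmatrix_fromBlocks]
    congr 1 <;> simp [charmatrix]
  have h11 : Matrix.scalar (Fin m) X * Matrix.scalar (Fin m) X + B.map C * (-(Bᵀ.map C))
      = Matrix.scalar (Fin m) (X ^ 2) - (B * Bᵀ).map C := by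
    rw [← map_mul (Matrix.scalar (Fin m)), ← sq, Matrix.map_mul (f := (C : ℤ →+* ℤ[X]))]
    rw [Matrix.mul_neg, sub_eq_add_neg]
  have h12 : (Matrix.scalar (Fin m) X : Matrix (Fin m) (Fin m) ℤ[X]) * (-(B.map C)) + B.map C * (Matrix.scalar (Fin k) X : Matrix (Fin k) (Fin k) ℤ[X])
      = (0 : Matrix (Fin m) (Fin k) ℤ[X]) := by
    have : (Matrix.scalar (Fin m) X : Matrix (Fin m) (Fin m) ℤ[X]) * (B.map C) = B.map C * (Matrix.scalar (Fin k) X : Matrix (Fin k) (Fin k) ℤ[X]) := by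
      ext i j
      simp [Matrix.mul_apply, Matrix.scalar_apply, Matrix.diagonal_apply, Finset.sum_ite_eq,
        Finset.sum_ite_eq', mul_comm]
    rw [Matrix.mul_neg, this]
    exact neg_add_cancel _
  have h21 : (0 : Matrix (Fin k) (Fin m) ℤ[X]) * (Matrix.scalar (Fin m) X : Matrix (Fin m) (Fin m) ℤ[X])
      + (Matrix.scalar (Fin k) X : Matrix (Fin k) (Fin k) ℤ[X]) * (-(Bᵀ.map C)) = (Matrix.scalar (Fin k) X : Matrix (Fin k) (Fin k) ℤ[X]) * (-(Bᵀ.map C)) := by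
    rw [Matrix.zero_mul, zero_add]
  have h22 : (0 : Matrix (Fin k) (Fin m) ℤ[X]) * (-(B.map C))
      + Matrix.scalar (Fin k) X * Matrix.scalar (Fin k) X = Matrix.scalar (Fin k) (X ^ 2) := by
    rw [Matrix.zero_mul, zero_add, ← map_mul (Matrix.scalar (Fin k)), ← sq]
  have hprod : N * charmatrix A =
      fromBlocks (Matrix.scalar (Fin m) (X ^ 2) - (B * Bᵀ).map C) 0
        ((Matrix.scalar (Fin k) X : Matrix (Fin k) (Fin k) ℤ[X]) * (-(Bᵀ.map C))) (Matrix.scalar (Fin k) (X ^ 2)) := by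
    rw [hchm, hN, fromBlocks_multiply, h11, h12, h21, h22]
  have hdetN : N.det = X ^ m * X ^ k := by
    rw [hN, det_fromBlocks_zero₂₁]
    simp [Matrix.scalar_apply, det_diagonal]
  have hdet2 : (Matrix.scalar (Fin k) (X ^ 2) : Matrix (Fin k) (Fin k) ℤ[X]).det
      = ((X : ℤ[X]) ^ 2) ^ k := by
    simp [Matrix.scalar_apply, det_diagonal]
  have hphi : (Matrix.scalar (Fin m) (X ^ 2) - (B * Bᵀ).map C).det
      = (B * Bᵀ).charpoly.comp (X ^ 2) := by
    set φ : ℤ[X] →+* ℤ[X] := eval₂RingHom (C : ℤ →+* ℤ[X]) (X ^ 2) with hφ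
    have hmap : (charmatrix (B * Bᵀ)).map φ
        = Matrix.scalar (Fin m) (X ^ 2) - (B * Bᵀ).map C := by
      ext i j
      by_cases hij : i = j
      · subst hij
        simp only [Matrix.map_apply, charmatrix_apply_eq, hφ, coe_eval₂RingHom, eval₂_sub,
          eval₂_X, eval₂_C, Matrix.sub_apply, Matrix.scalar_apply, Matrix.diagonal_apply_eq]
      · simp only [Matrix.map_apply, charmatrix_apply_ne _ _ _ hij, hφ, coe_eval₂RingHom,
          eval₂_neg, eval₂_C, Matrix.sub_apply, Matrix.scalar_apply,
          Matrix.diagonal_apply_ne _ hij, zero_sub]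
    rw [← hmap, ← RingHom.mapMatrix_apply, ← RingHom.map_det]
    rfl
  have := congrArg Matrix.det hprod
  rw [det_mul, hdetN, det_fromBlocks_zero₁₂, hphi, hdet2] at this
  simp only [Matrix.charpoly] at this ⊢
  linear_combination this

lemma charpoly_blocks (m k δ : ℕ) (hk : k = m + δ) (B : Matrix (Fin m) (Fin k) ℤ) :
    (fromBlocks 0 B Bᵀ 0).charpoly = X ^ δ * (B * Bᵀ).charpoly.comp (X ^ 2) := by
  have hX : (X : ℤ[X]) ^ m * X ^ k ≠ 0 :=
    mul_ne_zero (pow_ne_zero _ X_ne_zero) (pow_ne_zero _ X_ne_zero)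
  apply mul_right_cancel₀ hX
  rw [charpoly_blocks_mul]
  rw [← pow_mul, show (X : ℤ[X]) ^ δ * (B * Bᵀ).charpoly.comp (X ^ 2) * (X ^ m * X ^ k)
    = (B * Bᵀ).charpoly.comp (X ^ 2) * (X ^ (δ + m + k)) from by rw [pow_add, pow_add]; ring]
  congr 2
  omega

section conj
variable {ι : Type*} [Fintype ι] [DecidableEq ι] {K : Type*} [CommRing K]

lemma charpoly_conj (P Q M : Matrix ι ι K) (h1 : P * Q = 1) :
    (P * M * Q).charpoly = M.charpoly := by
  set P' := (C : K →+* K[X]).mapMatrix P with hP'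
  set Q' := (C : K →+* K[X]).mapMatrix Q with hQ'
  have hPQ : P' * Q' = 1 := by rw [hP', hQ', ← _root_.map_mul, h1, _root_.map_one]
  have hcommP : Matrix.scalar ι (X : K[X]) * P' = P' * Matrix.scalar ι X :=
    ((Matrix.scalar_commute (X : K[X]) (fun r' => Commute.all X r') P')).eq
  have hc : charmatrix (P * M * Q) = P' * charmatrix M * Q' := by
    rw [charmatrix, charmatrix, _root_.map_mul, _root_.map_mul, mul_sub, sub_mul]
    congr 1
    rw [← hcommP, mul_assoc, hPQ, mul_one]
  rw [Matrix.charpoly, Matrix.charpoly, hc, det_mul, det_mul]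
  have : P'.det * Q'.det = 1 := by rw [← det_mul, hPQ, det_one]
  linear_combination (charmatrix M).det * this

lemma charpoly_diagonal (d : ι → K) :
    (diagonal d).charpoly = ∏ i, (X - C (d i)) := by
  have h : charmatrix (diagonal d) = diagonal fun i => X - C (d i) := by
    ext i j
    by_cases hij : i = j
    · subst hij; simp
    · simp [charmatrix_apply_ne _ _ _ hij, diagonal_apply_ne _ hij]
  rw [Matrix.charpoly, h, det_diagonal]

end conj

section spec
variable {m k : ℕ} (B : Matrix (Fin m) (Fin k) ℤ)

noncomputable def Brm : Matrix (Fin m) (Fin k) ℝ := B.map (Int.castRingHom ℝ)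

lemma hermBB : ((Brm B) * (Brm B)ᴴ).IsHermitian := isHermitian_mul_conjTranspose_self _

lemma BrBr_eq : (Brm B) * (Brm B)ᴴ = (B * Bᵀ).map (Int.castRingHom ℝ) := by
  rw [conjTranspose_eq_transpose_of_trivial, Matrix.map_mul (f := Int.castRingHom ℝ), Brm,
    Matrix.transpose_map]

lemma eig_nonneg (i : Fin m) : 0 ≤ (hermBB B).eigenvalues i :=
  Matrix.eigenvalues_self_mul_conjTranspose_nonneg _ _

lemma charpoly_BBt_real :
    ((B * Bᵀ).charpoly).map (Int.castRingHom ℝ) = ∏ i, (X - C ((hermBB B).eigenvalues i)) := by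
  rw [← Matrix.charpoly_map, ← BrBr_eq]
  have hU : ((hermBB B).eigenvectorUnitary : Matrix (Fin m) (Fin m) ℝ) *
      star ((hermBB B).eigenvectorUnitary : Matrix (Fin m) (Fin m) ℝ) = 1 :=
    (Unitary.mem_iff.mp (hermBB B).eigenvectorUnitary.2).2
  calc ((Brm B) * (Brm B)ᴴ).charpoly
      = (((hermBB B).eigenvectorUnitary : Matrix (Fin m) (Fin m) ℝ) *
          diagonal (RCLike.ofReal ∘ (hermBB B).eigenvalues) *
          star ((hermBB B).eigenvectorUnitary : Matrix (Fin m) (Fin m) ℝ)).charpoly := by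
        exact congrArg Matrix.charpoly (hermBB B).spectral_theorem
    _ = (diagonal (RCLike.ofReal ∘ (hermBB B).eigenvalues)).charpoly :=
        charpoly_conj _ _ _ hU
    _ = ∏ i, (X - C ((hermBB B).eigenvalues i)) := by
        rw [_root_.charpoly_diagonal]
        simp [RCLike.ofReal_real_eq_id]

lemma trace_pow_eq (e : ℕ) :
    ((Matrix.trace ((B * Bᵀ) ^ e) : ℤ) : ℝ) = ∑ i, (hermBB B).eigenvalues i ^ e := by
  have h1 : ((Matrix.trace ((B * Bᵀ) ^ e) : ℤ) : ℝ)
      = Matrix.trace ((((B * Bᵀ) ^ e)).map (Int.castRingHom ℝ)) := by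
    simp [Matrix.trace, Matrix.map_apply]
  have h2 : (((B * Bᵀ) ^ e)).map (Int.castRingHom ℝ) = ((Brm B) * (Brm B)ᴴ) ^ e := by
    rw [BrBr_eq]
    exact (map_pow ((Int.castRingHom ℝ).mapMatrix) (B * Bᵀ) e : _)
  have hU2 : star ((hermBB B).eigenvectorUnitary : Matrix (Fin m) (Fin m) ℝ) *
      ((hermBB B).eigenvectorUnitary : Matrix (Fin m) (Fin m) ℝ) = 1 :=
    (Unitary.mem_iff.mp (hermBB B).eigenvectorUnitary.2).1
  set U : Matrix (Fin m) (Fin m) ℝ := ((hermBB B).eigenvectorUnitary : Matrix (Fin m) (Fin m) ℝ)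
    with hUdef
  set Dg : Matrix (Fin m) (Fin m) ℝ := diagonal (RCLike.ofReal ∘ (hermBB B).eigenvalues)
    with hDgdef
  have hspec : (Brm B) * (Brm B)ᴴ = U * Dg * star U := (hermBB B).spectral_theorem
  have hU1 : U * star U = 1 := (Unitary.mem_iff.mp (hermBB B).eigenvectorUnitary.2).2
  have hpow : ∀ e : ℕ, ((Brm B) * (Brm B)ᴴ) ^ e = U * Dg ^ e * star U := by
    intro e
    induction e with
    | zero => simp [hU1]
    | succ e ih =>
        rw [pow_succ, ih, hspec, pow_succ]
        simp only [Matrix.mul_assoc]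
        rw [← Matrix.mul_assoc (star U) U, hU2, Matrix.one_mul]
  rw [h1, h2, hpow e, Matrix.trace_mul_comm, ← Matrix.mul_assoc, hU2, Matrix.one_mul]
  rw [Matrix.diagonal_pow, Matrix.trace_diagonal]
  simp [RCLike.ofReal_real_eq_id]

lemma det_BBt_eq : ((Matrix.det (B * Bᵀ) : ℤ) : ℝ) = ∏ i, (hermBB B).eigenvalues i := by
  have h1 : ((Matrix.det (B * Bᵀ) : ℤ) : ℝ) = Matrix.det ((Brm B) * (Brm B)ᴴ) := by
    rw [BrBr_eq]
    exact (RingHom.map_det (Int.castRingHom ℝ) (B * Bᵀ) : _)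
  rw [h1, (hermBB B).det_eq_prod_eigenvalues]
  simp [RCLike.ofReal_real_eq_id]

end spec

section vand
variable {m k : ℕ} (B : Matrix (Fin m) (Fin k) ℤ)

/-- matrix of power sums of eigenvalues -/
noncomputable def Smat : Matrix (Fin m) (Fin m) ℤ :=
  Matrix.of fun i j => Matrix.trace ((B * Bᵀ) ^ ((i : ℕ) + (j : ℕ)))

lemma Smat_cast :
    (Smat B).map (Int.castRingHom ℝ) =
      (vandermonde ((hermBB B).eigenvalues))ᵀ * vandermonde ((hermBB B).eigenvalues) := by
  ext i j
  rw [Matrix.map_apply, Matrix.mul_apply]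
  rw [show (Int.castRingHom ℝ) (Smat B i j)
      = ((Matrix.trace ((B * Bᵀ) ^ ((i : ℕ) + (j : ℕ))) : ℤ) : ℝ) from rfl, trace_pow_eq]
  refine Finset.sum_congr rfl fun x _ => ?_
  rw [Matrix.transpose_apply, Matrix.vandermonde_apply, Matrix.vandermonde_apply, pow_add]

lemma Smat_det_cast :
    (((Smat B).det : ℤ) : ℝ) = (vandermonde ((hermBB B).eigenvalues)).det ^ 2 := by
  have h := RingHom.map_det (Int.castRingHom ℝ) (Smat B)
  rw [RingHom.mapMatrix_apply, Smat_cast] at h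
  rw [show (((Smat B).det : ℤ) : ℝ) = (Int.castRingHom ℝ) (Smat B).det from rfl, h, det_mul,
    det_transpose, sq]

lemma MD_eig : MD (Finset.univ.val.map ((hermBB B).eigenvalues)) = (((Smat B).det : ℤ) : ℝ) := by
  rw [MD_univ_map, Smat_det_cast, det_vandermonde]
  rw [← Finset.prod_pow]
  refine Finset.prod_congr rfl fun i _ => ?_
  rw [← Finset.prod_pow]

end vand

lemma polyDisc_eq_MD (f : Polynomial ℤ) :
    polyDisc f = MD ((f.map (Int.castRingHom ℂ)).roots) := rfl

/-- Let `n ≥ 2`, `δ = 0` if `n` is even and `δ = 1` if `n` is odd,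
let `B` be a `⌊n/2⌋ × ⌈n/2⌉` integer matrix and `A = [[0, B], [Bᵀ, 0]]`. If the
coefficient of `x^δ` in `χ(A;x)` is `±1`, then `Δ_A = 4^⌊n/2⌋ · (Δ_{BBᵀ})²`, and
consequently `2^{-⌊n/2⌋} · √Δ_A = Δ_{BBᵀ}`. -/
theorem disc_fromBlocks_eq (n : ℕ) (hn : 2 ≤ n)
    (B : Matrix (Fin (n / 2)) (Fin ((n + 1) / 2)) ℤ)
    (hcoeff : (Matrix.fromBlocks 0 B Bᵀ 0).charpoly.coeff (n % 2) = 1 ∨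
      (Matrix.fromBlocks 0 B Bᵀ 0).charpoly.coeff (n % 2) = -1) :
    polyDisc (Matrix.fromBlocks 0 B Bᵀ 0).charpoly =
      4 ^ (n / 2) * (polyDisc (B * Bᵀ).charpoly) ^ 2 ∧
    ∃ D : ℤ, polyDisc ((B * Bᵀ).charpoly) = (D : ℂ) ∧
      polyDisc (Matrix.fromBlocks 0 B Bᵀ 0).charpoly = ((4 ^ (n / 2) * D ^ 2 : ℤ) : ℂ) ∧
      Real.sqrt ((4 ^ (n / 2) * D ^ 2 : ℤ) : ℝ) = 2 ^ (n / 2) * (D : ℝ) := by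
  classical
  have hk : (n + 1) / 2 = n / 2 + n % 2 := by omega
  have hA := charpoly_blocks (n / 2) ((n + 1) / 2) (n % 2) hk B
  set lam := (hermBB B).eigenvalues with hlam
  -- coefficient information
  have hc0 : ((X : ℤ[X]) ^ (n % 2) * (B * Bᵀ).charpoly.comp (X ^ 2)).coeff (n % 2)
      = (B * Bᵀ).charpoly.coeff 0 := by
    have h := coeff_X_pow_mul ((B * Bᵀ).charpoly.comp (X ^ 2)) (n % 2) 0
    rw [zero_add] at h
    rw [h, coeff_zero_eq_eval_zero, eval_comp, coeff_zero_eq_eval_zero]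
    simp
  have hcoeff0 : (B * Bᵀ).charpoly.coeff 0 = 1 ∨ (B * Bᵀ).charpoly.coeff 0 = -1 := by
    rwa [hA, hc0] at hcoeff
  have hdetpm : (B * Bᵀ).det = 1 ∨ (B * Bᵀ).det = -1 := by
    rw [det_eq_sign_charpoly_coeff]
    rcases hcoeff0 with h | h <;> rw [h] <;>
      rcases Nat.even_or_odd (Fintype.card (Fin (n / 2))) with he | ho
    · left; rw [he.neg_one_pow]; ring
    · right; rw [ho.neg_one_pow]; ring
    · right; rw [he.neg_one_pow]; ring
    · left; rw [ho.neg_one_pow]; ring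
  have hdetnn : (0 : ℝ) ≤ (((B * Bᵀ).det : ℤ) : ℝ) := by
    rw [det_BBt_eq]
    exact Finset.prod_nonneg fun i _ => eig_nonneg B i
  have hdet : (B * Bᵀ).det = 1 := by
    rcases hdetpm with h | h
    · exact h
    · exfalso; rw [h] at hdetnn; norm_num at hdetnn
  have hprodlam : ∏ i, lam i = 1 := by
    have := det_BBt_eq B
    rw [hdet] at this
    simpa [hlam] using this.symm
  -- root multisets
  obtain ⟨Λ, hΛ⟩ : ∃ L : Multiset ℂ, L = Finset.univ.val.map (fun i => ((lam i : ℝ) : ℂ)) :=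
    ⟨_, rfl⟩
  have hΛcard : Multiset.card Λ = n / 2 := by
    rw [hΛ, Multiset.card_map]
    simp
  have hΛprod : Λ.prod = 1 := by
    rw [hΛ, ← Finset.prod_eq_multiset_prod, ← Complex.ofReal_prod, hprodlam]
    norm_num
  have hcastcomp : (Int.castRingHom ℂ) = (Complex.ofRealHom).comp (Int.castRingHom ℝ) := by
    exact RingHom.ext_int _ _
  have hG : (B * Bᵀ).charpoly.map (Int.castRingHom ℂ) = (Λ.map fun a => X - C a).prod := by
    rw [hcastcomp, ← Polynomial.map_map, charpoly_BBt_real, Polynomial.map_prod]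
    rw [hΛ, Multiset.map_map, ← Finset.prod_eq_multiset_prod]
    refine Finset.prod_congr rfl fun i _ => ?_
    rw [Polynomial.map_sub, Polynomial.map_X, Polynomial.map_C]
    rfl
  have hrootsG : ((B * Bᵀ).charpoly.map (Int.castRingHom ℂ)).roots = Λ := by
    rw [hG, roots_multiset_prod_X_sub_C]
  have hpdg : polyDisc (B * Bᵀ).charpoly = MD Λ := by rw [polyDisc_eq_MD, hrootsG]
  -- square-root choice
  set c : ℂ → ℂ := fun z => ((Real.sqrt z.re : ℝ) : ℂ) with hcdef
  have hc : ∀ μ ∈ Λ, c μ ^ 2 = μ := by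
    intro μ hμ
    rw [hΛ] at hμ
    obtain ⟨i, _, rfl⟩ := Multiset.mem_map.mp hμ
    rw [hcdef]
    simp only [Complex.ofReal_re]
    rw [← Complex.ofReal_pow, Real.sq_sqrt (eig_nonneg B i)]
  have hF : (Matrix.fromBlocks 0 B Bᵀ 0).charpoly.map (Int.castRingHom ℂ) =
      (((Multiset.replicate (n % 2) (0 : ℂ)) + Λ.bind fun μ => {c μ, -c μ}).map
        fun a => X - C a).prod := by
    rw [hA, Polynomial.map_mul, Polynomial.map_pow, Polynomial.map_X, Polynomial.map_comp,
      Polynomial.map_pow, Polynomial.map_X, hG]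
    rw [Multiset.map_add, Multiset.prod_add, Multiset.map_replicate, Multiset.prod_replicate,
      map_zero, sub_zero]
    congr 1
    rw [multiset_prod_comp, Multiset.map_map, Multiset.map_bind, Multiset.prod_bind]
    refine congrArg Multiset.prod (Multiset.map_congr rfl fun μ hμ => ?_)
    simp only [Function.comp_apply, Multiset.insert_eq_cons, Multiset.map_cons,
      Multiset.map_singleton, Multiset.prod_cons, Multiset.prod_singleton]
    rw [sub_comp, X_comp, C_comp, map_neg]
    have hmul : ((X : ℂ[X]) - C (c μ)) * (X - -C (c μ)) = X ^ 2 - C (c μ) ^ 2 := by ring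
    rw [hmul, ← map_pow, hc μ hμ]
  have hrootsF : ((Matrix.fromBlocks 0 B Bᵀ 0).charpoly.map (Int.castRingHom ℂ)).roots =
      (Multiset.replicate (n % 2) (0 : ℂ)) + Λ.bind fun μ => {c μ, -c μ} := by
    rw [hF, roots_multiset_prod_X_sub_C]
  have hpdF : polyDisc (Matrix.fromBlocks 0 B Bᵀ 0).charpoly =
      MD ((Multiset.replicate (n % 2) (0 : ℂ)) + Λ.bind fun μ => {c μ, -c μ}) := by
    rw [polyDisc_eq_MD, hrootsF]
  have hMDT : MD ((Multiset.replicate (n % 2) (0 : ℂ)) + Λ.bind fun μ => {c μ, -c μ}) =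
      4 ^ (n / 2) * MD Λ ^ 2 := by
    rcases Nat.mod_two_eq_zero_or_one n with h2 | h2 <;> rw [h2]
    · rw [Multiset.replicate_zero, zero_add, MD_bind c Λ hc, hΛcard, hΛprod]
      ring
    · rw [Multiset.replicate_one, Multiset.singleton_add, MD_bind_zero c Λ hc, hΛcard, hΛprod]
      ring
  have hfirst : polyDisc (Matrix.fromBlocks 0 B Bᵀ 0).charpoly =
      4 ^ (n / 2) * (polyDisc (B * Bᵀ).charpoly) ^ 2 := by
    rw [hpdF, hMDT, hpdg]
  refine ⟨hfirst, (Smat B).det, ?_, ?_, ?_⟩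
  · -- polyDisc of B*Bᵀ is the integer D
    rw [hpdg]
    have hmap : Λ = (Finset.univ.val.map lam).map Complex.ofRealHom := by
      rw [hΛ, Multiset.map_map]
      rfl
    rw [hmap, MD_map, MD_eig]
    exact Complex.ofReal_intCast _
  · rw [hfirst]
    have : polyDisc (B * Bᵀ).charpoly = (((Smat B).det : ℤ) : ℂ) := by
      rw [hpdg]
      have hmap : Λ = (Finset.univ.val.map lam).map Complex.ofRealHom := by
        rw [hΛ, Multiset.map_map]
        rfl
      rw [hmap, MD_map, MD_eig]
      exact Complex.ofReal_intCast _
    rw [this]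
    push_cast
    ring
  · have hDnn : 0 ≤ (Smat B).det := by
      have h := Smat_det_cast B
      have : (0 : ℝ) ≤ (((Smat B).det : ℤ) : ℝ) := by rw [h]; positivity
      exact_mod_cast this
    have h2 : ((2 : ℝ) ^ (n / 2) * ((Smat B).det : ℝ)) ^ 2
        = 4 ^ (n / 2) * ((Smat B).det : ℝ) ^ 2 := by
      rw [mul_pow, ← pow_mul, Nat.mul_comm, pow_mul]
      norm_num
    have h1 : (((4 ^ (n / 2) * (Smat B).det ^ 2 : ℤ)) : ℝ)
        = (2 ^ (n / 2) * ((Smat B).det : ℝ)) ^ 2 := by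
      rw [h2]
      push_cast
      ring
    rw [h1, Real.sqrt_sq (by positivity)]
end

section
/- Let n ≥ 2, set δ = 0 if n is even and δ = 1 if n is odd, let B be a ⌊n/2⌋ × ⌈n/2⌉ integer matrix, and let A = [[0, B],[Bᵀ, 0]]. Suppose the coefficient of x^δ in χ(A;x) equals 1 or −1. Let φ(x) be a monic irreducible polynomial over 𝔽₂ such that φ(x)² divides χ(A;x) in 𝔽₂[x]. Then φ(x) divides χ(BBᵀ;x) in 𝔽₂[x] and φ(0) = 1 in 𝔽₂. -/
open Polynomial Matrix

private lemma reflect_reflect' {R : Type*} [Semiring R] (N : ℕ) (f : R[X]) :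
    reflect N (reflect N f) = f := by
  ext i
  simp [coeff_reflect, revAt_invol]

private lemma eq_X_pow_mul_of_reverse_eq {R : Type*} [CommSemiring R] [Nontrivial R]
    {p q : R[X]} {d : ℕ} (hq : q.natDegree = p.natDegree + d)
    (h : p.reverse = q.reverse) : q = X ^ d * p := by
  have h1 : reflect (d + p.natDegree) (X ^ d * p) = reflect p.natDegree p := by
    rw [reflect_mul (X ^ d : R[X]) p (le_of_eq (natDegree_X_pow d)) le_rfl,
      reflect_monomial, revAt_le le_rfl, Nat.sub_self, pow_zero, one_mul]
  have h2 : reflect (d + p.natDegree) q = reflect (d + p.natDegree) (X ^ d * p) := by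
    rw [h1]
    have := h
    rw [Polynomial.reverse, Polynomial.reverse, hq, add_comm p.natDegree d] at this
    exact this.symm
  have := congrArg (reflect (d + p.natDegree)) h2
  rwa [reflect_reflect', reflect_reflect'] at this

private lemma zmod2_sq_cancel {f g : (ZMod 2)[X]} (h : f ^ 2 = g ^ 2) : f = g := by
  have h2 : (f - g) ^ 2 = 0 := by
    rw [CharTwo.sub_eq_add, CharTwo.add_sq, h, CharTwo.add_self_eq_zero]
  have := pow_eq_zero_iff (n := 2) two_ne_zero |>.mp h2
  exact sub_eq_zero.mp this

private lemma zmod2_expand (f : (ZMod 2)[X]) :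
    Polynomial.expand (ZMod 2) 2 f = f ^ 2 := by
  have := Polynomial.map_frobenius_expand 2 f
  rwa [ZMod.frobenius_zmod, Polynomial.map_id] at this

private lemma charpoly_block_sq {k l : ℕ} (D : Matrix (Fin k) (Fin l) (ZMod 2)) :
    (fromBlocks 0 D Dᵀ 0).charpoly = (D * Dᵀ).charpoly * (Dᵀ * D).charpoly := by
  set M : Matrix (Fin k ⊕ Fin l) (Fin k ⊕ Fin l) (ZMod 2) := fromBlocks 0 D Dᵀ 0 with hM
  have hM2 : M * M = fromBlocks (D * Dᵀ) 0 0 (Dᵀ * D) := by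
    simp [hM, fromBlocks_multiply]
  have haddself : ∀ A : Matrix (Fin k ⊕ Fin l) (Fin k ⊕ Fin l) ((ZMod 2)[X]), A + A = 0 := by
    intro A; ext i j; simp [Matrix.add_apply, CharTwo.add_self_eq_zero]
  have hnegself : ∀ A : Matrix (Fin k ⊕ Fin l) (Fin k ⊕ Fin l) ((ZMod 2)[X]), -A = A := by
    intro A; ext i j; simp [Matrix.neg_apply, CharTwo.neg_eq]
  have hcomm : Matrix.scalar (Fin k ⊕ Fin l) (X : (ZMod 2)[X]) *
        (Polynomial.C : (ZMod 2) →+* (ZMod 2)[X]).mapMatrix M =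
      (Polynomial.C : (ZMod 2) →+* (ZMod 2)[X]).mapMatrix M *
        Matrix.scalar (Fin k ⊕ Fin l) (X : (ZMod 2)[X]) := by
    rw [Matrix.scalar_commute X (fun r => Commute.all X r) _]
  have hcm : charmatrix M * charmatrix M =
      Matrix.scalar (Fin k ⊕ Fin l) ((X : (ZMod 2)[X]) ^ 2) -
        (Polynomial.C : (ZMod 2) →+* (ZMod 2)[X]).mapMatrix (M * M) := by
    rw [charmatrix]
    set s := Matrix.scalar (Fin k ⊕ Fin l) (X : (ZMod 2)[X])
    set N := (Polynomial.C : (ZMod 2) →+* (ZMod 2)[X]).mapMatrix M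
    have : (s - N) * (s - N) = s * s - (s * N + s * N) + N * N := by
      rw [sub_mul, mul_sub, mul_sub, ← hcomm]
      abel
    have hss : s * s = Matrix.scalar (Fin k ⊕ Fin l) ((X : (ZMod 2)[X]) ^ 2) := by
      rw [sq]; exact (_root_.map_mul (Matrix.scalar (Fin k ⊕ Fin l)) X X).symm
    have hNN : N * N = (Polynomial.C : (ZMod 2) →+* (ZMod 2)[X]).mapMatrix (M * M) :=
      (_root_.map_mul ((Polynomial.C : (ZMod 2) →+* (ZMod 2)[X]).mapMatrix) M M).symm
    rw [this, haddself, sub_zero, hss, hNN, sub_eq_add_neg, hnegself]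
  have hsq : M.charpoly ^ 2 = (M * M).charpoly ^ 2 := by
    have e1 : M.charpoly ^ 2 = ((charmatrix M) * (charmatrix M)).det := by
      rw [det_mul, Matrix.charpoly, sq]
    have e2 : Polynomial.expand (ZMod 2) 2 ((M * M).charpoly) =
        (Matrix.scalar (Fin k ⊕ Fin l) ((X : (ZMod 2)[X]) ^ 2) -
          (Polynomial.C : (ZMod 2) →+* (ZMod 2)[X]).mapMatrix (M * M)).det := by
      rw [Matrix.charpoly, AlgHom.map_det]
      congr 1
      ext i j
      rcases eq_or_ne i j with rfl | hij
      · simp [charmatrix_apply_eq, Matrix.map_apply, Matrix.sub_apply, Matrix.scalar_apply,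
          Matrix.mul_apply, map_sum, _root_.map_mul]
      · simp [charmatrix_apply_ne _ _ _ hij, Matrix.map_apply, Matrix.sub_apply,
          Matrix.scalar_apply, diagonal_apply_ne _ hij, hij, Matrix.mul_apply, map_sum,
          _root_.map_mul]
    rw [e1, hcm, ← e2, zmod2_expand]
  have := zmod2_sq_cancel hsq
  rw [this, hM2, charpoly_fromBlocks_zero₁₂]

private lemma charpoly_transpose_mul {k l d : ℕ} (h : l = k + d)
    (D : Matrix (Fin k) (Fin l) (ZMod 2)) :
    (Dᵀ * D).charpoly = X ^ d * (D * Dᵀ).charpoly := by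
  apply eq_X_pow_mul_of_reverse_eq
  · rw [Matrix.charpoly_natDegree_eq_dim, Matrix.charpoly_natDegree_eq_dim,
      Fintype.card_fin, Fintype.card_fin, h]
  · rw [Matrix.reverse_charpoly, Matrix.reverse_charpoly, Matrix.charpolyRev,
      Matrix.charpolyRev]
    calc det (1 - (X : (ZMod 2)[X]) • (D * Dᵀ).map Polynomial.C)
        = det (1 - ((X : (ZMod 2)[X]) • D.map Polynomial.C) * Dᵀ.map Polynomial.C) := by
          rw [Matrix.map_mul, Matrix.smul_mul]
      _ = det (1 - Dᵀ.map Polynomial.C * ((X : (ZMod 2)[X]) • D.map Polynomial.C)) :=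
          Matrix.det_one_sub_mul_comm _ _
      _ = det (1 - (X : (ZMod 2)[X]) • (Dᵀ * D).map Polynomial.C) := by
          rw [Matrix.mul_smul, Matrix.map_mul]

/-- Let `n ≥ 2`, `(n % 2) = 0` if `n` is even and `(n % 2) = 1` if `n` is odd,
let `B` be a `⌊n/2⌋ × ⌈n/2⌉` integer matrix and `A = [[0, B], [Bᵀ, 0]]` with the
coefficient of `x^(n % 2)` in `χ(A;x)` equal to `±1`. If `φ` is a monic irreducible
polynomial over `𝔽₂` with `φ² ∣ χ(A;x)` in `𝔽₂[x]`, then `φ ∣ χ(BBᵀ;x)` in `𝔽₂[x]`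
and `φ(0) = 1`. -/
theorem multiple_factor_dvd_charpoly_BBt (n : ℕ) (hn : 2 ≤ n)
    (B : Matrix (Fin (n / 2)) (Fin ((n + 1) / 2)) ℤ)
    (hcoeff : (Matrix.fromBlocks 0 B Bᵀ 0).charpoly.coeff (n % 2) = 1 ∨
      (Matrix.fromBlocks 0 B Bᵀ 0).charpoly.coeff (n % 2) = -1)
    (φ : Polynomial (ZMod 2)) (hmonic : φ.Monic) (hirr : Irreducible φ)
    (hdvd : φ ^ 2 ∣ (Matrix.fromBlocks 0 B Bᵀ 0).charpoly.map (Int.castRingHom (ZMod 2))) :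
    φ ∣ (B * Bᵀ).charpoly.map (Int.castRingHom (ZMod 2)) ∧ φ.eval 0 = 1 := by
  set f := Int.castRingHom (ZMod 2) with hf
  set D := B.map f with hDdef
  have hδ : (n + 1) / 2 = n / 2 + (n % 2) := by omega
  set ψ : (ZMod 2)[X] := (D * Dᵀ).charpoly with hψdef
  -- the mapped block matrix
  have hblockmap : (Matrix.fromBlocks 0 B Bᵀ 0).map f = Matrix.fromBlocks 0 D Dᵀ 0 := by
    rw [Matrix.fromBlocks_map, Matrix.transpose_map]
    congr 1 <;> ext i j <;> simp [Matrix.map_apply]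
  have hmapchar : (Matrix.fromBlocks 0 B Bᵀ 0).charpoly.map f = X ^ (n % 2) * ψ ^ 2 := by
    rw [← Matrix.charpoly_map, hblockmap, charpoly_block_sq,
      charpoly_transpose_mul hδ D, hψdef]
    ring
  have hmapBBt : (B * Bᵀ).charpoly.map f = ψ := by
    rw [← Matrix.charpoly_map, hψdef, Matrix.map_mul, Matrix.transpose_map]
  -- the constant coefficient of ψ is 1
  have hψ0 : ψ.eval 0 = 1 := by
    have h1 : ((Matrix.fromBlocks 0 B Bᵀ 0).charpoly.map f).coeff (n % 2) = 1 := by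
      rw [Polynomial.coeff_map]
      rcases hcoeff with h | h <;> rw [h] <;> decide
    rw [hmapchar] at h1
    have h2 : (X ^ (n % 2) * ψ ^ 2).coeff (n % 2) = (ψ ^ 2).coeff 0 := by
      have := Polynomial.coeff_X_pow_mul (ψ ^ 2) (n % 2) 0
      simpa using this
    rw [h2] at h1
    rw [Polynomial.coeff_zero_eq_eval_zero, Polynomial.eval_pow] at h1
    have : ∀ a : ZMod 2, a ^ 2 = 1 → a = 1 := by decide
    exact this _ h1
  have hXψ : ¬ (X : (ZMod 2)[X]) ∣ ψ := by
    intro hXd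
    obtain ⟨c, hc⟩ := hXd
    rw [hc] at hψ0
    simp at hψ0
  have hprime : Prime φ := hirr.prime
  rw [hmapchar] at hdvd
  -- φ divides ψ
  have hφψ : φ ∣ ψ := by
    by_contra hns
    have h1 : φ ∣ X ^ (n % 2) * ψ ^ 2 := dvd_trans (dvd_pow_self φ two_ne_zero) hdvd
    rcases hprime.dvd_mul.mp h1 with h2 | h2
    · have hd1 : (n % 2) = 0 ∨ (n % 2) = 1 := by omega
      rcases hd1 with hd | hd <;> rw [hd] at h2 hdvd
      · rw [pow_zero] at h2
        exact hirr.not_isUnit (isUnit_of_dvd_one h2)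
      · rw [pow_one] at h2
        have hassoc : Associated φ X := hirr.associated_of_dvd Polynomial.irreducible_X h2
        have hφX : φ = X := Polynomial.eq_of_monic_of_associated hmonic Polynomial.monic_X hassoc
        subst hφX
        rw [pow_one] at hdvd
        have h3 : (X : (ZMod 2)[X]) ∣ ψ ^ 2 := by
          have h4 : (X : (ZMod 2)[X]) * X ∣ X * ψ ^ 2 := by rwa [← sq]
          exact (mul_dvd_mul_iff_left (Polynomial.X_ne_zero (R := ZMod 2))).mp h4
        exact hXψ (Polynomial.prime_X.dvd_of_dvd_pow h3)
    · exact hns (hprime.dvd_of_dvd_pow h2)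
  constructor
  · rwa [hmapBBt]
  · have hne : φ.eval 0 ≠ 0 := by
      intro h0
      have hXφ : (X : (ZMod 2)[X]) ∣ φ := by
        rw [Polynomial.X_dvd_iff, Polynomial.coeff_zero_eq_eval_zero]
        exact h0
      have hassoc : Associated X φ :=
        Polynomial.irreducible_X.associated_of_dvd hirr hXφ
      have : (X : (ZMod 2)[X]) = φ :=
        Polynomial.eq_of_monic_of_associated Polynomial.monic_X hmonic hassoc
      exact hXψ (this ▸ hφψ)
    have : ∀ a : ZMod 2, a ≠ 0 → a = 1 := by decide
    exact this _ hne
end
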